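/- arXiv:1308.6390 — 8 statements merged into one kernel-verified Lean document; each statement's English description precedes it below -/
import Mathlib

section
/- If p ∈ P_bp(k,l) is a building partition, then pp* = |^{⊗l} and the number of loops removed in the composition pp* equals b(p) − t(p), the number of non-through-blocks of p. -/
/-- A two-row partition with `k` upper and `l` lower points, encoded as the
equivalence relation whose classes are the blocks. -/
abbrev PP (k l : ℕ) := Setoid (Fin k ⊕ Fin l)

/-- The involution `p*` (turning `p` upside down). -/
def swapP {k l : ℕ} (p : PP k l) : PP l k := Setoid.comap Sum.swap p

/-- Disjoint union of two setoids. -/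
def sumSetoid {α β : Type*} (s : Setoid α) (t : Setoid β) : Setoid (α ⊕ β) where
  r := Sum.LiftRel s.r t.r
  iseqv := by
    refine ⟨fun x => ?_, fun {x y} h => ?_, fun {x y z} h1 h2 => ?_⟩
    · cases x with
      | inl a => exact Sum.LiftRel.inl (s.iseqv.refl a)
      | inr b => exact Sum.LiftRel.inr (t.iseqv.refl b)
    · cases h with
      | inl h => exact Sum.LiftRel.inl (s.iseqv.symm h)
      | inr h => exact Sum.LiftRel.inr (t.iseqv.symm h)
    · cases h1 with
      | inl h1 =>
        cases h2 with
        | inl h2 => exact Sum.LiftRel.inl (s.iseqv.trans h1 h2)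
      | inr h1 =>
        cases h2 with
        | inr h2 => exact Sum.LiftRel.inr (t.iseqv.trans h1 h2)

/-- Reindexing equivalence for the horizontal concatenation (tensor product). -/
def tensorEquiv (k l k' l' : ℕ) :
    (Fin (k + k') ⊕ Fin (l + l')) ≃ ((Fin k ⊕ Fin l) ⊕ (Fin k' ⊕ Fin l')) :=
  (Equiv.sumCongr finSumFinEquiv.symm finSumFinEquiv.symm).trans
    (Equiv.sumSumSumComm (Fin k) (Fin k') (Fin l) (Fin l'))

/-- Tensor product (horizontal concatenation) of partitions. -/
def tensorP {k l k' l' : ℕ} (p : PP k l) (q : PP k' l') : PP (k + k') (l + l') :=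
  Setoid.comap (tensorEquiv k l k' l') (sumSetoid p q)

/-- The relation on `k ⊔ l ⊔ m` points generated by `p` (upper part) and `q` (lower part). -/
def midRel {k l m : ℕ} (p : PP k l) (q : PP l m) :
    (Fin k ⊕ (Fin l ⊕ Fin m)) → (Fin k ⊕ (Fin l ⊕ Fin m)) → Prop := fun x y =>
  (∃ a b : Fin k ⊕ Fin l, p.r a b ∧ x = Sum.map id Sum.inl a ∧ y = Sum.map id Sum.inl b) ∨
  (∃ a b : Fin l ⊕ Fin m, q.r a b ∧ x = Sum.inr a ∧ y = Sum.inr b)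

/-- The equivalence relation generated on `k ⊔ l ⊔ m` in the composition procedure. -/
def bigS {k l m : ℕ} (p : PP k l) (q : PP l m) : Setoid (Fin k ⊕ (Fin l ⊕ Fin m)) :=
  Relation.EqvGen.setoid (midRel p q)

/-- `compP q p` is the vertical composition `qp` (apply `p : P(k,l)` first, then `q : P(l,m)`). -/
def compP {k l m : ℕ} (q : PP l m) (p : PP k l) : PP k m :=
  Setoid.comap (Sum.map id Sum.inr) (bigS p q)

/-- `rlP q p` : the number of closed loops removed in the composition `qp`,
i.e. the blocks of the generated relation consisting only of middle points. -/
noncomputable def rlP {k l m : ℕ} (q : PP l m) (p : PP k l) : ℕ :=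
  Nat.card {c : Quotient (bigS p q) //
    ∀ x, Quotient.mk (bigS p q) x = c → ∃ b : Fin l, x = Sum.inr (Sum.inl b)}

/-- `b(p)` : number of blocks. -/
noncomputable def bP {k l : ℕ} (p : PP k l) : ℕ := Nat.card (Quotient p)

/-- `t(p)` : number of through-blocks (blocks meeting both rows). -/
noncomputable def tP {k l : ℕ} (p : PP k l) : ℕ :=
  Nat.card {c : Quotient p // (∃ a : Fin k, Quotient.mk p (Sum.inl a) = c) ∧
    (∃ b : Fin l, Quotient.mk p (Sum.inr b) = c)}

/-- `β(p) = b(p) - t(p)` : number of non-through-blocks. -/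
noncomputable def betaP {k l : ℕ} (p : PP k l) : ℕ := bP p - tP p

/-- The identity partition `|^{⊗k}`. -/
def idP (k : ℕ) : PP k k := Setoid.ker (Sum.elim (fun i : Fin k => i) (fun i : Fin k => i))

/-- A pair partition: all blocks have size two. -/
def isPair {k l : ℕ} (p : PP k l) : Prop := ∀ x, Nat.card {y // p.r x y} = 2

/-- A through-partition: a pair partition each of whose blocks connects exactly one
upper point to exactly one lower point. -/
def isThrough {k : ℕ} (p : PP k k) : Prop :=
  isPair p ∧ (∀ a b : Fin k, p.r (Sum.inl a) (Sum.inl b) → a = b) ∧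
    (∀ a b : Fin k, p.r (Sum.inr a) (Sum.inr b) → a = b)

/-- A building partition. -/
def isBuilding {k l : ℕ} (p : PP k l) : Prop :=
  (∀ b b' : Fin l, p.r (Sum.inr b) (Sum.inr b') → b = b') ∧
  (∀ b : Fin l, ∃ a : Fin k, p.r (Sum.inl a) (Sum.inr b)) ∧
  (∀ b b' : Fin l, ∀ a a' : Fin k, b < b' →
    IsLeast {x : Fin k | p.r (Sum.inl x) (Sum.inr b)} a →
    IsLeast {x : Fin k | p.r (Sum.inl x) (Sum.inr b')} a' → a < a')

/-- A projective partition: symmetric and idempotent. -/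
def isProjective {k : ℕ} (p : PP k k) : Prop := swapP p = p ∧ compP p p = p

/-- Linear position of the points, reading the upper row left to right and then the
lower row right to left. -/
def posP (k l : ℕ) : Fin k ⊕ Fin l → ℕ :=
  Sum.elim (fun i => (i : ℕ)) (fun j => k + (l - 1 - (j : ℕ)))

/-- Noncrossing partitions. -/
def isNC {k l : ℕ} (p : PP k l) : Prop :=
  ¬ ∃ x1 x2 x3 x4 : Fin k ⊕ Fin l,
    posP k l x1 < posP k l x2 ∧ posP k l x2 < posP k l x3 ∧ posP k l x3 < posP k l x4 ∧
    p.r x1 x3 ∧ p.r x2 x4 ∧ ¬ p.r x1 x2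


namespace BAux
variable {k l : ℕ}

def toBase {k l : ℕ} : Fin l ⊕ (Fin k ⊕ Fin l) → Fin k ⊕ Fin l := Sum.elim Sum.inr id

lemma mid_to_base (p : PP k l) {x y} (h : midRel (swapP p) p x y) :
    p.r (toBase x) (toBase y) := by
  rcases h with ⟨a, b, hab, hx, hy⟩ | ⟨a, b, hab, hx, hy⟩
  · subst hx; subst hy
    have hab' : p.r (Sum.swap a) (Sum.swap b) := hab
    cases a <;> cases b <;> simpa [toBase, Sum.swap] using hab'
  · subst hx; subst hy; simpa [toBase] using hab

lemma eqv_of_base (p : PP k l) (hp2 : ∀ b : Fin l, ∃ a : Fin k, p.r (Sum.inl a) (Sum.inr b))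
    (x : Fin l ⊕ (Fin k ⊕ Fin l)) :
    Relation.EqvGen (midRel (swapP p) p) x (Sum.inr (toBase x)) := by
  cases x with
  | inr a => exact Relation.EqvGen.refl _
  | inl j =>
    obtain ⟨i, hi⟩ := hp2 j
    have h1 : midRel (swapP p) p (Sum.inl j) (Sum.inr (Sum.inl i)) :=
      Or.inl ⟨Sum.inl j, Sum.inr i, p.iseqv.symm hi, rfl, rfl⟩
    have h2 : midRel (swapP p) p (Sum.inr (Sum.inl i)) (Sum.inr (Sum.inr j)) :=
      Or.inr ⟨Sum.inl i, Sum.inr j, hi, rfl, rfl⟩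
    exact Relation.EqvGen.trans _ _ _ (Relation.EqvGen.rel _ _ h1) (Relation.EqvGen.rel _ _ h2)

lemma bigS_iff (p : PP k l) (hp2 : ∀ b : Fin l, ∃ a : Fin k, p.r (Sum.inl a) (Sum.inr b))
    (x y : Fin l ⊕ (Fin k ⊕ Fin l)) :
    (bigS (swapP p) p).r x y ↔ p.r (toBase x) (toBase y) := by
  show Relation.EqvGen (midRel (swapP p) p) x y ↔ _
  constructor
  · intro h
    induction h with
    | rel _ _ h => exact mid_to_base p h
    | refl _ => exact p.iseqv.refl _
    | symm _ _ _ ih => exact p.iseqv.symm ih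
    | trans _ _ _ _ _ ih1 ih2 => exact p.iseqv.trans ih1 ih2
  · intro h
    refine Relation.EqvGen.trans _ _ _ (eqv_of_base p hp2 x) ?_
    refine Relation.EqvGen.trans _ _ _ ?_ (Relation.EqvGen.symm _ _ (eqv_of_base p hp2 y))
    exact Relation.EqvGen.rel _ _ (Or.inr ⟨toBase x, toBase y, h, rfl, rfl⟩)

end BAux

/-- for a building partition `p ∈ P_bp(k,l)` one has `pp* = |^{⊗l}` and
`rl(p,p*) = b(p) - t(p)`. -/
theorem building_comp_swap {k l : ℕ} (p : PP k l) (hp : isBuilding p) :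
    compP p (swapP p) = idP l ∧ rlP p (swapP p) = bP p - tP p := by
  classical
  obtain ⟨hp1, hp2, -⟩ := hp
  constructor
  · apply Setoid.ext
    intro x y
    show (bigS (swapP p) p).r (Sum.map id Sum.inr x) (Sum.map id Sum.inr y) ↔ _
    rw [BAux.bigS_iff p hp2]
    constructor
    · intro h
      cases x <;> cases y <;> exact hp1 _ _ h
    · intro h
      have h' : (Sum.elim (fun i : Fin l => i) (fun i : Fin l => i) x : Fin l) =
          Sum.elim (fun i : Fin l => i) (fun i : Fin l => i) y := h
      cases x <;> cases y <;> (dsimp only [Sum.elim] at h'; subst h'; exact p.iseqv.refl _)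
  · -- counting
    set S := bigS (swapP p) p with hS
    have key : ∀ x y, S.r x y ↔ p.r (BAux.toBase x) (BAux.toBase y) := BAux.bigS_iff p hp2
    -- the map to Quotient p
    let ψ : Quotient S → Quotient p :=
      Quotient.lift (fun x => Quotient.mk p (BAux.toBase x))
        (fun a b h => Quotient.sound ((key a b).1 h))
    have ψ_mk : ∀ x, ψ (Quotient.mk S x) = Quotient.mk p (BAux.toBase x) := fun _ => rfl
    have ψ_inj : Function.Injective ψ := by
      intro c d h
      induction c using Quotient.ind
      induction d using Quotient.ind
      exact Quotient.sound ((key _ _).2 (Quotient.exact h))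
    have ψ_surj : Function.Surjective ψ := by
      intro d
      induction d using Quotient.ind with
      | _ a => exact ⟨Quotient.mk S (Sum.inr a), rfl⟩
    let e : Quotient S ≃ Quotient p := Equiv.ofBijective ψ ⟨ψ_inj, ψ_surj⟩
    have hiff : ∀ c : Quotient S,
        (∀ x, Quotient.mk S x = c → ∃ b : Fin k, x = Sum.inr (Sum.inl b)) ↔
        ¬ ∃ j : Fin l, Quotient.mk p (Sum.inr j) = e c := by
      intro c
      constructor
      · rintro h ⟨j, hj⟩
        have hc : Quotient.mk S (Sum.inr (Sum.inr j)) = c := by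
          apply ψ_inj
          rw [ψ_mk]
          exact hj
        obtain ⟨b, hb⟩ := h _ hc
        simp at hb
      · intro h x hx
        cases x with
        | inl j => exact absurd ⟨j, by rw [← hx]; rfl⟩ h
        | inr a =>
          cases a with
          | inl b => exact ⟨b, rfl⟩
          | inr j => exact absurd ⟨j, by rw [← hx]; rfl⟩ h
    have hcard1 : rlP p (swapP p) =
        Nat.card {d : Quotient p // ¬ ∃ j : Fin l, Quotient.mk p (Sum.inr j) = d} :=
      Nat.card_congr (Equiv.subtypeEquiv e hiff)
    -- through blocks
    have hT : tP p = Nat.card {d : Quotient p // ∃ j : Fin l, Quotient.mk p (Sum.inr j) = d} := by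
      apply Nat.card_congr
      apply Equiv.subtypeEquivRight
      intro c
      constructor
      · rintro ⟨-, hb⟩; exact hb
      · rintro ⟨j, hj⟩
        refine ⟨?_, ⟨j, hj⟩⟩
        obtain ⟨i, hi⟩ := hp2 j
        exact ⟨i, by rw [← hj]; exact Quotient.sound hi⟩
    haveI : Finite (Quotient p) := Quotient.finite _
    have hsplit : Nat.card {d : Quotient p // ∃ j : Fin l, Quotient.mk p (Sum.inr j) = d} +
        Nat.card {d : Quotient p // ¬ ∃ j : Fin l, Quotient.mk p (Sum.inr j) = d} =
        Nat.card (Quotient p) := by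
      rw [← Nat.card_sum]
      exact Nat.card_congr (Equiv.sumCompl _)
    rw [hcard1, hT]
    unfold bP
    omega
end

section
/- If p ∈ P_bp(k,l) is a building partition, then p*p is a projective partition (symmetric and idempotent) with t(p*p) = l, and no loops are removed in the composition p*p. -/
/-! Call a block of `p` a through-block if it contains a lower point. In `p*p`, a path can
cross the middle row only inside a through-block, so two points of `p*p` are joined iff they
lie in the same block of `p` and, when they come from different copies of the upper row, that
block is a through-block. Every partition of this shape (two copies of a set of points labelled
by a map `u`, and a predicate `T` on the labels) is projective: composing it with itself only
inserts a middle copy, which is again linked to the outer copies exactly at the labels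
satisfying `T`. The through-blocks of `p*p` are those of `p`; for a building partition they are
in bijection with the lower points, and every lower point lies in a block with an upper point,
so no loop is closed. -/

variable {k l m : ℕ}

section Composition

theorem bigS_map_inl_of_rel (p : PP k l) (q : PP l m) {a b : Fin k ⊕ Fin l} (h : p.r a b) :
    (bigS p q).r (Sum.map id Sum.inl a) (Sum.map id Sum.inl b) :=
  Relation.EqvGen.rel _ _ (Or.inl ⟨a, b, h, rfl, rfl⟩)

theorem bigS_inr_of_rel (p : PP k l) (q : PP l m) {a b : Fin l ⊕ Fin m} (h : q.r a b) :
    (bigS p q).r (Sum.inr a) (Sum.inr b) :=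
  Relation.EqvGen.rel _ _ (Or.inr ⟨a, b, h, rfl, rfl⟩)

variable {X : Type*} (f : Fin k ⊕ Fin l → X) (g : Fin l ⊕ Fin m → X)

theorem bigS_ker (hmid : ∀ b, f (.inr b) = g (.inl b))
    (hshared : ∀ a c, f (.inl a) = g (.inr c) → ∃ b, f (.inl a) = f (.inr b)) :
    bigS (Setoid.ker f) (Setoid.ker g) = Setoid.ker (Sum.elim (f ∘ Sum.inl) g) := by
  have upper_middle : ∀ a y, f (.inl a) = g y →
      (bigS (Setoid.ker f) (Setoid.ker g)).r (.inl a) (.inr y) := by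
    rintro a (b | c) h
    · exact bigS_map_inl_of_rel _ _ (a := .inl a) (b := .inr b) (h.trans (hmid b).symm)
    · obtain ⟨b, hb⟩ := hshared a c h
      exact Setoid.trans' _ (bigS_map_inl_of_rel _ _ (a := .inl a) (b := .inr b) hb)
        (bigS_inr_of_rel _ (Setoid.ker g) (a := .inl b) (b := .inr c)
          ((hmid b).symm.trans (hb.symm.trans h)))
  refine le_antisymm (Setoid.eqvGen_le ?_) fun x y hxy => ?_
  · rintro _ _ (⟨a, b, hab, rfl, rfl⟩ | ⟨a, b, hab, rfl, rfl⟩)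
    · rcases a with a | a <;> rcases b with b | b <;>
        simpa only [Setoid.ker_def, Sum.map_inl, Sum.map_inr, Sum.elim_inl, Sum.elim_inr,
          Function.comp_apply, id, hmid] using hab
    · exact hab
  · rcases x with a | x <;> rcases y with a' | y
    · exact bigS_map_inl_of_rel _ _ (a := .inl a) (b := .inl a') hxy
    · exact upper_middle a y hxy
    · exact Setoid.symm' _ (upper_middle a' x hxy.symm)
    · exact bigS_inr_of_rel _ _ hxy

theorem compP_ker (hmid : ∀ b, f (.inr b) = g (.inl b))
    (hshared : ∀ a c, f (.inl a) = g (.inr c) → ∃ b, f (.inl a) = f (.inr b)) :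
    compP (Setoid.ker g) (Setoid.ker f) = Setoid.ker (Sum.elim (f ∘ Sum.inl) (g ∘ Sum.inr)) := by
  unfold compP
  rw [bigS_ker f g hmid hshared]
  ext (a | a) (b | b) <;> rfl

theorem rlP_eq_zero_of_lower_covered (q : PP l m) (p : PP k l)
    (hcov : ∀ b, ∃ a, p.r (.inl a) (.inr b)) : rlP q p = 0 := by
  refine Nat.card_eq_zero.2 (Or.inl ⟨fun ⟨c, hc⟩ => ?_⟩)
  induction c using Quotient.inductionOn with | h x => ?_
  obtain ⟨b, rfl⟩ := hc x rfl
  obtain ⟨a, ha⟩ := hcov b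
  obtain ⟨_, h⟩ := hc (.inl a) (Quotient.sound (bigS_map_inl_of_rel p q ha))
  cases h

end Composition

section Doubling

variable {V : Type*} (T : V → Prop)

open Classical in
noncomputable def tagged (n : ℕ) (v : V) : V × ℕ := (v, if T v then 0 else n)

theorem tagged_injective (n : ℕ) : Function.Injective (tagged T n) :=
  fun _ _ h => congrArg Prod.fst h

theorem tagged_eq_tagged_iff {m n : ℕ} {v w : V} :
    tagged T m v = tagged T n w ↔ v = w ∧ (T v ∨ m = n) := by
  constructor
  · intro h
    obtain ⟨rfl, htag⟩ := Prod.mk.inj h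
    by_cases hv : T v
    · exact ⟨rfl, Or.inl hv⟩
    · simp only [hv, if_false] at htag
      exact ⟨rfl, Or.inr htag⟩
  · rintro ⟨rfl, hv | rfl⟩
    · simp only [tagged, hv, if_true]
    · rfl

/-- Two copies of `Fin k`, joined within a copy by equal values of `u` and across the copies
only at values satisfying `T`. -/
noncomputable def doubleP (u : Fin k → V) : PP k k :=
  Setoid.ker (Sum.elim (tagged T 1 ∘ u) (tagged T 2 ∘ u))

variable (u : Fin k → V)

theorem doubleP_eq_ker {m n : ℕ} (hmn : m ≠ n) :
    doubleP T u = Setoid.ker (Sum.elim (tagged T m ∘ u) (tagged T n ∘ u)) := by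
  unfold doubleP
  ext (a | a) (b | b) <;> simp [Setoid.ker_def, tagged_eq_tagged_iff, hmn, hmn.symm]

theorem doubleP_inl_inl_iff {a a' : Fin k} :
    (doubleP T u).r (.inl a) (.inl a') ↔ u a = u a' :=
  (tagged_injective T 1).eq_iff

theorem doubleP_inr_inl_iff {a b : Fin k} :
    (doubleP T u).r (.inr b) (.inl a) ↔ u b = u a ∧ T (u b) := by
  unfold doubleP
  simp [Setoid.ker_def, tagged_eq_tagged_iff]

theorem swapP_doubleP : swapP (doubleP T u) = doubleP T u := by
  conv_rhs => rw [doubleP_eq_ker T u (by decide : 2 ≠ 1)]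
  ext (a | a) (b | b) <;> rfl

theorem compP_doubleP : compP (doubleP T u) (doubleP T u) = doubleP T u := by
  calc compP (doubleP T u) (doubleP T u)
      = compP (Setoid.ker (Sum.elim (tagged T 3 ∘ u) (tagged T 2 ∘ u)))
          (Setoid.ker (Sum.elim (tagged T 1 ∘ u) (tagged T 3 ∘ u))) := by
        rw [← doubleP_eq_ker T u (by decide : 3 ≠ 2), ← doubleP_eq_ker T u (by decide : 1 ≠ 3)]
    _ = doubleP T u := by
        refine compP_ker _ _ (fun _ => rfl) fun a c h => ⟨a, ?_⟩
        have hT := ((tagged_eq_tagged_iff T).1 h).2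
        exact (tagged_eq_tagged_iff T).2 ⟨rfl, Or.inl (hT.resolve_right (by decide))⟩

theorem isProjective_doubleP : isProjective (doubleP T u) :=
  ⟨swapP_doubleP T u, compP_doubleP T u⟩

theorem tP_doubleP : tP (doubleP T u) = Nat.card {v // (∃ a, u a = v) ∧ T v} := by
  let π : Quotient (doubleP T u) → V :=
    Quotient.lift (Sum.elim u u) (by rintro (a | a) (b | b) h <;> exact congrArg Prod.fst h)
  refine Nat.card_congr (Equiv.ofBijective (fun c => ⟨π c.1, ?_⟩) ⟨?_, ?_⟩)
  · obtain ⟨_, ⟨a, rfl⟩, b, hb⟩ := c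
    have hba := (doubleP_inr_inl_iff T u).1 (Quotient.exact hb)
    exact ⟨⟨a, rfl⟩, show T (u a) from hba.1 ▸ hba.2⟩
  · rintro ⟨_, ⟨a, rfl⟩, _⟩ ⟨_, ⟨a', rfl⟩, _⟩ h
    exact Subtype.ext (Quotient.sound ((doubleP_inl_inl_iff T u).2 (congrArg Subtype.val h)))
  · rintro ⟨_, ⟨a, rfl⟩, hT⟩
    exact ⟨⟨_, ⟨a, rfl⟩, a, Quotient.sound ((doubleP_inr_inl_iff T u).2 ⟨rfl, hT⟩)⟩, rfl⟩

end Doubling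

section SwapComp

def IsThroughBlock (p : PP k l) (v : Quotient p) : Prop := ∃ b, Quotient.mk p (.inr b) = v

theorem compP_swapP_self (p : PP k l) :
    compP (swapP p) p = doubleP (IsThroughBlock p) fun a => Quotient.mk p (.inl a) := by
  set f := tagged (IsThroughBlock p) 1 ∘ Quotient.mk p
  set g := tagged (IsThroughBlock p) 2 ∘ Quotient.mk p ∘ Sum.swap
  have hf : Setoid.ker f = p :=
    Setoid.ext fun _ _ => (tagged_injective _ 1).eq_iff.trans Quotient.eq
  have hg : Setoid.ker g = swapP p :=
    Setoid.ext fun _ _ => (tagged_injective _ 2).eq_iff.trans Quotient.eq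
  have hmid : ∀ b, f (.inr b) = g (.inl b) := fun b =>
    (tagged_eq_tagged_iff _).2 ⟨rfl, Or.inl ⟨b, rfl⟩⟩
  have hshared : ∀ a c, f (.inl a) = g (.inr c) → ∃ b, f (.inl a) = f (.inr b) := by
    intro a c h
    obtain ⟨b, hb⟩ := ((tagged_eq_tagged_iff _).1 h).2.resolve_right (by decide)
    exact ⟨b, by simp only [f, Function.comp_apply, hb]⟩
  calc compP (swapP p) p = compP (Setoid.ker g) (Setoid.ker f) := by rw [hf, hg]
    _ = _ := compP_ker f g hmid hshared

theorem tP_compP_swapP_self (p : PP k l) : tP (compP (swapP p) p) = tP p := by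
  rw [compP_swapP_self, tP_doubleP]
  rfl

theorem tP_eq_of_lower_separated_covered (p : PP k l)
    (hsep : ∀ b b', p.r (.inr b) (.inr b') → b = b') (hcov : ∀ b, ∃ a, p.r (.inl a) (.inr b)) :
    tP p = l := by
  refine (Nat.card_congr (Equiv.ofBijective
    (fun b => ⟨Quotient.mk p (.inr b), (hcov b).imp fun _ => Quotient.sound, b, rfl⟩)
    ⟨fun b b' h => hsep b b' (Quotient.exact (congrArg Subtype.val h)), ?_⟩)).symm.trans
    (Nat.card_fin l)
  rintro ⟨_, -, b, rfl⟩
  exact ⟨b, rfl⟩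

end SwapComp

/-- for a building partition `p ∈ P_bp(k,l)`, `p*p` is projective with
`t(p*p) = l` and no loops are removed in the composition `p*p`. -/
theorem building_swap_comp_projective {k l : ℕ} (p : PP k l) (hp : isBuilding p) :
    isProjective (compP (swapP p) p) ∧ tP (compP (swapP p) p) = l ∧ rlP (swapP p) p = 0 := by
  obtain ⟨hsep, hcov, -⟩ := hp
  refine ⟨?_, ?_, rlP_eq_zero_of_lower_covered _ p hcov⟩
  · rw [compP_swapP_self]
    exact isProjective_doubleP _ _
  · rw [tP_compP_swapP_self]
    exact tP_eq_of_lower_separated_covered p hsep hcov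
end

section
/- Every partition p ∈ P(k,l) with t(p) through-blocks admits a unique through-block decomposition p = q*rs where s ∈ P_bp(k, t(p)) and q ∈ P_bp(l, t(p)) are building partitions and r ∈ P_2(t(p), t(p)) is a through-partition; moreover no loops are removed in composing r with s nor q* with rs, b(p) = b(q) + b(s) − t(p), and β(p) = β(q) + β(s) where β denotes the number of non-through-blocks. -/
/-!
Call the leftmost point of a block its leader. `s` keeps the blocks of `p` on the upper row and
attaches its `i`-th lower point to the through-block with the `i`-th leftmost leader; `q` does the
same on the lower row, and `r` matches the two copies of each through-block. Ordering lower points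
by leaders is exactly the building condition, so a building partition is determined by its upper
blocks together with those of them that reach the lower row. In a composite `q'* r' s'` of
building and through partitions, distinct middle points lie in distinct blocks of each factor, so
the composite can be computed pointwise; hence any such decomposition of `p` reproduces the upper
blocks, the lower blocks and the through-blocks of `p`, which pins it down. Every middle point is
attached to an outer point, so no loops arise, and `b(q) + b(s) = b(p) + t(p)` is
inclusion–exclusion for the upper and lower classes of `p`.
-/

open Function Set

theorem Set.Finite.exists_isLeast {α : Type*} [LinearOrder α] {S : Set α} (hS : S.Finite)
    (hne : S.Nonempty) : ∃ a, IsLeast S a :=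
  (hS.exists_minimal hne).imp fun _ => minimal_iff_isLeast.1

theorem Setoid.sum_ext {α β : Type*} {r s : Setoid (α ⊕ β)}
    (hll : ∀ a a', r (.inl a) (.inl a') ↔ s (.inl a) (.inl a'))
    (hlr : ∀ a b, r (.inl a) (.inr b) ↔ s (.inl a) (.inr b))
    (hrr : ∀ b b', r (.inr b) (.inr b') ↔ s (.inr b) (.inr b')) : r = s := by
  ext x y
  rcases x with a | b <;> rcases y with a' | b'
  · exact hll a a'
  · exact hlr a b'
  · exact r.comm'.trans ((hlr a' b).trans s.comm')
  · exact hrr b b'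

section Composition

variable {k l m : ℕ}

def UpperSeparated (p : PP k l) : Prop := ∀ a a' : Fin k, p (.inl a) (.inl a') → a = a'

def LowerSeparated (p : PP k l) : Prop := ∀ b b' : Fin l, p (.inr b) (.inr b') → b = b'

theorem UpperSeparated.rel_iff {p : PP k l} (hp : UpperSeparated p) {a a' : Fin k} :
    p (.inl a) (.inl a') ↔ a = a' :=
  ⟨hp a a', by rintro rfl; exact p.refl' _⟩

theorem LowerSeparated.rel_iff {p : PP k l} (hp : LowerSeparated p) {b b' : Fin l} :
    p (.inr b) (.inr b') ↔ b = b' :=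
  ⟨hp b b', by rintro rfl; exact p.refl' _⟩

open Classical in
noncomputable def classTag (p : PP k l) (q : PP l m) (c : Quotient p) :
    Quotient p ⊕ Quotient q :=
  if h : ∃ b, Quotient.mk p (.inr b) = c then .inr (Quotient.mk q (.inl h.choose)) else .inl c

/-- When `p` is `LowerSeparated`, a `p`-block meets the middle row in at most one point, so a
block of the composite is either a `p`-block avoiding the middle row or is labelled by the unique
`q`-block it contains: `compTag` is a complete invariant of `bigS p q`. -/
noncomputable def compTag (p : PP k l) (q : PP l m) :
    Fin k ⊕ (Fin l ⊕ Fin m) → Quotient p ⊕ Quotient q :=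
  Sum.elim (fun a => classTag p q (Quotient.mk p (.inl a))) fun w => .inr (Quotient.mk q w)

variable {p : PP k l} {q : PP l m}

theorem classTag_injective (hq : UpperSeparated q) : Injective (classTag p q) := by
  intro c c' h
  unfold classTag at h
  split_ifs at h with hc hc'
  · rw [← hc.choose_spec, ← hc'.choose_spec, hq _ _ (Quotient.exact (Sum.inr_injective h))]
  · exact Sum.inl_injective h

theorem classTag_eq_inr_iff (hp : LowerSeparated p) {c : Quotient p} {d : Quotient q} :
    classTag p q c = .inr d ↔ ∃ b, Quotient.mk p (.inr b) = c ∧ Quotient.mk q (.inl b) = d := by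
  unfold classTag
  split_ifs with h
  · rw [Sum.inr.injEq]
    constructor
    · rintro rfl
      exact ⟨_, h.choose_spec, rfl⟩
    · rintro ⟨b, hb, rfl⟩
      rw [hp _ _ (Quotient.exact (h.choose_spec.trans hb.symm))]
  · simp only [false_iff]
    rintro ⟨b, hb, -⟩
    exact h ⟨b, hb⟩

theorem compTag_map_inl (hp : LowerSeparated p) (z : Fin k ⊕ Fin l) :
    compTag p q (Sum.map id .inl z) = classTag p q (Quotient.mk p z) := by
  rcases z with a | b
  · rfl
  · exact ((classTag_eq_inr_iff hp).2 ⟨b, rfl, rfl⟩).symm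

theorem compTag_cases (x : Fin k ⊕ (Fin l ⊕ Fin m)) :
    (∃ w, bigS p q x (.inr w) ∧ compTag p q x = .inr (Quotient.mk q w)) ∨
      ∃ a, x = .inl a ∧ compTag p q x = .inl (Quotient.mk p (.inl a)) := by
  rcases x with a | w
  · by_cases h : ∃ b, Quotient.mk p (.inr b) = Quotient.mk p (.inl a)
    · refine .inl ⟨.inl h.choose, ?_, by simp only [compTag, classTag, Sum.elim_inl, dif_pos h]⟩
      exact .rel _ _ (.inl ⟨.inl a, .inr h.choose, Quotient.exact h.choose_spec.symm, rfl, rfl⟩)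
    · exact .inr ⟨a, rfl, by simp only [compTag, classTag, Sum.elim_inl, dif_neg h]⟩
  · exact .inl ⟨w, (bigS p q).refl' _, rfl⟩

theorem bigS_eq_ker_compTag (hp : LowerSeparated p) : bigS p q = Setoid.ker (compTag p q) := by
  refine le_antisymm (Setoid.eqvGen_le ?_) ?_
  · rintro _ _ (⟨z, z', hz, rfl, rfl⟩ | ⟨w, w', hw, rfl, rfl⟩)
    · rw [Setoid.ker_def, compTag_map_inl hp, compTag_map_inl hp, Quotient.sound hz]
    · exact congrArg Sum.inr (Quotient.sound hw)
  · intro x y hxy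
    rw [Setoid.ker_def] at hxy
    rcases compTag_cases x with ⟨w, hxw, hx⟩ | ⟨a, rfl, hx⟩ <;>
      rcases compTag_cases y with ⟨w', hyw, hy⟩ | ⟨a', rfl, hy⟩ <;>
      rw [hx, hy] at hxy <;> simp only [Sum.inr.injEq, Sum.inl.injEq, reduceCtorEq] at hxy
    · exact (bigS p q).trans' hxw <| (bigS p q).trans'
        (.rel _ _ (.inr ⟨w, w', Quotient.exact hxy, rfl, rfl⟩)) ((bigS p q).symm' hyw)
    · exact .rel _ _ (.inl ⟨.inl a, .inl a', Quotient.exact hxy, rfl, rfl⟩)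

theorem compP_rel_iff (hp : LowerSeparated p) (x y : Fin k ⊕ Fin m) :
    compP q p x y ↔ compTag p q (Sum.map id .inr x) = compTag p q (Sum.map id .inr y) := by
  rw [compP, Setoid.comap_rel, bigS_eq_ker_compTag hp, Setoid.ker_def]

theorem compP_rel_inl_inl (hp : LowerSeparated p) (hq : UpperSeparated q) (a a' : Fin k) :
    compP q p (.inl a) (.inl a') ↔ p (.inl a) (.inl a') :=
  (compP_rel_iff hp _ _).trans ((classTag_injective hq).eq_iff.trans Quotient.eq)

theorem compP_rel_inl_inr (hp : LowerSeparated p) (a : Fin k) (c : Fin m) :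
    compP q p (.inl a) (.inr c) ↔ ∃ b, p (.inl a) (.inr b) ∧ q (.inl b) (.inr c) := by
  rw [compP_rel_iff hp]
  refine (classTag_eq_inr_iff hp).trans (exists_congr fun b => ?_)
  rw [Quotient.eq, Quotient.eq, p.comm']
  exact Iff.rfl

theorem compP_rel_inr_inr (hp : LowerSeparated p) (c c' : Fin m) :
    compP q p (.inr c) (.inr c') ↔ q (.inr c) (.inr c') :=
  (compP_rel_iff hp _ _).trans (Sum.inr_injective.eq_iff.trans Quotient.eq)

theorem LowerSeparated.compP (hp : LowerSeparated p) (hq : LowerSeparated q) :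
    LowerSeparated (compP q p) :=
  fun c c' h => hq c c' ((compP_rel_inr_inr hp c c').1 h)

theorem rlP_eq_zero (h : ∀ b, (∃ a, p (.inl a) (.inr b)) ∨ ∃ c, q (.inl b) (.inr c)) :
    rlP q p = 0 := by
  rw [rlP, Nat.card_eq_zero]
  refine .inl ⟨fun ⟨c, hc⟩ => ?_⟩
  obtain ⟨x, rfl⟩ := Quotient.exists_rep c
  obtain ⟨b, rfl⟩ := hc x rfl
  rcases h b with ⟨a, ha⟩ | ⟨c, hc'⟩
  · obtain ⟨_, h⟩ := hc (.inl a) (Quotient.sound (.rel _ _ (.inl ⟨_, _, ha, rfl, rfl⟩)))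
    cases h
  · obtain ⟨_, h⟩ := hc (.inr (.inr c))
      (Quotient.sound (.symm _ _ (.rel _ _ (.inr ⟨_, _, hc', rfl, rfl⟩))))
    cases h

end Composition

section ThreeFold

variable {k l n : ℕ} {q : PP l n} {r : PP n n} {s : PP k n}

theorem compP_swapP_compP_rel_inl_inl (hs : LowerSeparated s) (hrU : UpperSeparated r)
    (hrL : LowerSeparated r) (hq : LowerSeparated q) (a a' : Fin k) :
    compP (swapP q) (compP r s) (.inl a) (.inl a') ↔ s (.inl a) (.inl a') :=
  (compP_rel_inl_inl (q := swapP q) (hs.compP hrL) hq a a').trans (compP_rel_inl_inl hs hrU a a')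

theorem compP_swapP_compP_rel_inr_inr (hs : LowerSeparated s) (hrL : LowerSeparated r)
    (b b' : Fin l) :
    compP (swapP q) (compP r s) (.inr b) (.inr b') ↔ q (.inl b) (.inl b') :=
  compP_rel_inr_inr (hs.compP hrL) b b'

theorem compP_swapP_compP_rel_inl_inr (hs : LowerSeparated s) (hrL : LowerSeparated r)
    (a : Fin k) (b : Fin l) :
    compP (swapP q) (compP r s) (.inl a) (.inr b) ↔
      ∃ i j, s (.inl a) (.inr i) ∧ r (.inl i) (.inr j) ∧ q (.inl b) (.inr j) := by
  rw [compP_rel_inl_inr (hs.compP hrL)]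
  simp only [compP_rel_inl_inr hs]
  constructor
  · rintro ⟨j, ⟨i, hi, hij⟩, hj⟩
    exact ⟨i, j, hi, hij, q.symm' hj⟩
  · rintro ⟨i, j, hi, hij, hj⟩
    exact ⟨j, ⟨i, hi, hij⟩, q.symm' hj⟩

end ThreeFold

section Through

variable {n : ℕ} {r : PP n n}

theorem isThrough.exists_ne_rel (hr : isThrough r) (x : Fin n ⊕ Fin n) : ∃ y, y ≠ x ∧ r x y := by
  have : Nontrivial {y // r x y} := Finite.one_lt_card_iff_nontrivial.1 (by rw [hr.1 x]; omega)
  obtain ⟨⟨y, hy⟩, hne⟩ := exists_ne (⟨x, r.refl' x⟩ : {y // r x y})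
  exact ⟨y, fun h => hne (Subtype.ext h), hy⟩

theorem isThrough.exists_rel_inr (hr : isThrough r) (i : Fin n) : ∃ j, r (.inl i) (.inr j) := by
  obtain ⟨y | j, hne, hy⟩ := hr.exists_ne_rel (.inl i)
  · exact absurd (congrArg Sum.inl (hr.2.1 i y hy).symm) hne
  · exact ⟨j, hy⟩

theorem isThrough.exists_inl_rel (hr : isThrough r) (j : Fin n) : ∃ i, r (.inl i) (.inr j) := by
  obtain ⟨i | y, hne, hy⟩ := hr.exists_ne_rel (.inr j)
  · exact ⟨i, r.symm' hy⟩
  · exact absurd (congrArg Sum.inr (hr.2.2 j y hy).symm) hne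

theorem isThrough_ker {C : Type*} {u v : Fin n → C} (hu : Injective u) (hv : Injective v)
    (huv : range u = range v) : isThrough (Setoid.ker (Sum.elim u v)) := by
  refine ⟨fun x => ?_, fun i i' h => hu h, fun j j' h => hv h⟩
  obtain ⟨i, hi⟩ : Sum.elim u v x ∈ range u := by
    rcases x with i | j
    · exact ⟨i, rfl⟩
    · exact huv ▸ ⟨j, rfl⟩
  obtain ⟨j, hj⟩ : Sum.elim u v x ∈ range v := huv ▸ ⟨i, hi⟩
  have hpair : {y | Setoid.ker (Sum.elim u v) x y} = {.inl i, .inr j} := by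
    ext (i' | j')
    · simp only [mem_ofPred_eq, Setoid.ker_def, Sum.elim_inl, ← hi, mem_insert_iff,
        mem_singleton_iff, reduceCtorEq, or_false, Sum.inl.injEq, hu.eq_iff, eq_comm]
    · simp only [mem_ofPred_eq, Setoid.ker_def, Sum.elim_inr, ← hj, mem_insert_iff,
        mem_singleton_iff, reduceCtorEq, false_or, Sum.inr.injEq, hv.eq_iff, eq_comm]
  calc Nat.card {y // Setoid.ker (Sum.elim u v) x y}
      = ({.inl i, .inr j} : Set (Fin n ⊕ Fin n)).ncard := by rw [← hpair]; rfl
    _ = 2 := ncard_pair Sum.inl_ne_inr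

end Through

section Building

variable {k n : ℕ} {s : PP k n}

theorem isBuilding.exists_isLeast (hs : isBuilding s) (i : Fin n) :
    ∃ a, IsLeast {x | s (.inl x) (.inr i)} a :=
  (toFinite _).exists_isLeast (hs.2.1 i)

theorem isBuilding.strictMono {ψ : Fin n → Fin k} (hs : isBuilding s)
    (hψ : ∀ i, IsLeast {x | s (.inl x) (.inr i)} (ψ i)) : StrictMono ψ :=
  fun i j hij => hs.2.2 i j _ _ hij (hψ i) (hψ j)

theorem tP_of_isBuilding (hs : isBuilding s) : tP s = n := by
  have hthrough : ∀ i, (∃ a, Quotient.mk s (.inl a) = Quotient.mk s (.inr i)) ∧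
      ∃ j, Quotient.mk s (.inr j) = Quotient.mk s (.inr i) := fun i =>
    ⟨(hs.2.1 i).imp fun _ ha => Quotient.sound ha, i, rfl⟩
  refine (Nat.card_eq_of_bijective (fun i => ⟨_, hthrough i⟩) ⟨fun i j h => ?_, ?_⟩).symm.trans
    (Nat.card_fin n)
  · exact hs.1 i j (Quotient.exact (congrArg Subtype.val h))
  · rintro ⟨c, -, i, rfl⟩
    exact ⟨i, rfl⟩

theorem rlP_eq_zero_of_isBuilding {m : ℕ} (hs : isBuilding s) (r : PP n m) : rlP r s = 0 :=
  rlP_eq_zero fun i => .inl (hs.2.1 i)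

theorem rlP_swapP_eq_zero_of_isBuilding {m : ℕ} {q : PP m n} (hq : isBuilding q) (p : PP k n) :
    rlP (swapP q) p = 0 :=
  rlP_eq_zero fun j => .inr ((hq.2.1 j).imp fun _ h => q.symm' h)

end Building

section Leaders

variable {k : ℕ} {C : Type*}

open Classical in
noncomputable def leaders (row : Fin k → C) (T : Set C) : Finset (Fin k) :=
  Finset.univ.filter fun a => row a ∈ T ∧ ∀ a', row a' = row a → a ≤ a'

variable {row : Fin k → C} {T : Set C}

theorem mem_leaders {a : Fin k} :
    a ∈ leaders row T ↔ row a ∈ T ∧ ∀ a', row a' = row a → a ≤ a' := by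
  simp [leaders]

theorem eq_of_mem_leaders {a a' : Fin k} (ha : a ∈ leaders row T) (ha' : a' ∈ leaders row T)
    (h : row a = row a') : a = a' :=
  le_antisymm ((mem_leaders.1 ha).2 a' h.symm) ((mem_leaders.1 ha').2 a h)

theorem exists_mem_leaders {c : C} (hc : c ∈ T) (hcr : c ∈ range row) :
    ∃ a ∈ leaders row T, row a = c := by
  obtain ⟨a, ha⟩ := (toFinite {a | row a = c}).exists_isLeast hcr
  exact ⟨a, mem_leaders.2 ⟨ha.1 ▸ hc, fun a' h => ha.2 (h.trans ha.1)⟩, ha.1⟩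

theorem image_leaders (hT : T ⊆ range row) : row '' leaders row T = T := by
  refine Subset.antisymm (image_subset_iff.2 fun a ha => (mem_leaders.1 ha).1) fun c hc => ?_
  obtain ⟨a, ha, rfl⟩ := exists_mem_leaders hc (hT hc)
  exact ⟨a, ha, rfl⟩

theorem card_leaders (hT : T ⊆ range row) : (leaders row T).card = Nat.card T := by
  rw [← Nat.card_eq_finsetCard]
  conv_rhs => rw [← image_leaders hT]
  exact (Nat.card_image_of_injOn fun a ha a' ha' h => eq_of_mem_leaders ha ha' h).symm

noncomputable def leaderClass {n : ℕ} (h : (leaders row T).card = n) : Fin n → C :=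
  row ∘ (leaders row T).orderEmbOfFin h

variable {n : ℕ} (h : (leaders row T).card = n)

theorem leaderClass_injective : Injective (leaderClass h) := fun i j hij =>
  (leaders row T).orderEmbOfFin h |>.injective <|
    eq_of_mem_leaders (Finset.orderEmbOfFin_mem _ h i) (Finset.orderEmbOfFin_mem _ h j) hij

theorem range_leaderClass (hT : T ⊆ range row) : range (leaderClass h) = T := by
  rw [leaderClass, range_comp, Finset.range_orderEmbOfFin, image_leaders hT]

theorem isLeast_leaderClass (i : Fin n) :
    IsLeast {x | row x = leaderClass h i} ((leaders row T).orderEmbOfFin h i) :=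
  ⟨rfl, fun _ hx => (mem_leaders.1 (Finset.orderEmbOfFin_mem _ h i)).2 _ hx⟩

noncomputable def buildingOf : PP k n :=
  Setoid.ker (Sum.elim row (leaderClass h))

theorem isBuilding_buildingOf : isBuilding (buildingOf h) :=
  ⟨fun _ _ hij => leaderClass_injective h hij, fun i => ⟨_, rfl⟩,
    fun i j a a' hij ha ha' => by
      rw [ha.unique (isLeast_leaderClass h i), ha'.unique (isLeast_leaderClass h j)]
      exact OrderEmbedding.strictMono _ hij⟩

theorem bP_buildingOf (hT : T ⊆ range row) : bP (buildingOf h) = Nat.card (range row) := by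
  rw [bP, buildingOf, Nat.card_congr (Setoid.quotientKerEquivRange _), Sum.elim_range,
    range_leaderClass h hT, union_eq_left.2 hT]

end Leaders

section BuildingUnique

variable {k n : ℕ} {C : Type*} {row : Fin k → C} {T : Set C} {s : PP k n}

theorem mem_leaders_iff_isLeast (hup : ∀ a a', s (.inl a) (.inl a') ↔ row a = row a')
    (hthr : ∀ a, (∃ i, s (.inl a) (.inr i)) ↔ row a ∈ T) {a : Fin k} :
    a ∈ leaders row T ↔ ∃ i, IsLeast {x | s (.inl x) (.inr i)} a := by
  rw [mem_leaders, ← hthr]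
  constructor
  · rintro ⟨⟨i, hi⟩, hmin⟩
    exact ⟨i, hi, fun x hx => hmin x ((hup x a).1 (s.trans' hx (s.symm' hi)))⟩
  · rintro ⟨i, hi, hmin⟩
    exact ⟨⟨i, hi⟩, fun a' h => hmin (s.trans' ((hup a' a).2 h) hi)⟩

theorem card_leaders_of_isBuilding (hs : isBuilding s)
    (hup : ∀ a a', s (.inl a) (.inl a') ↔ row a = row a')
    (hthr : ∀ a, (∃ i, s (.inl a) (.inr i)) ↔ row a ∈ T) : (leaders row T).card = n := by
  choose ψ hψ using hs.exists_isLeast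
  have hleaders : leaders row T = Finset.univ.image ψ := by
    ext a
    simp only [Finset.mem_image, Finset.mem_univ, true_and, mem_leaders_iff_isLeast hup hthr]
    exact exists_congr fun i => ⟨(hψ i).unique, fun h => h ▸ hψ i⟩
  rw [hleaders, Finset.card_image_of_injective _ (hs.strictMono hψ).injective,
    Finset.card_univ, Fintype.card_fin]

theorem eq_buildingOf (hs : isBuilding s) (hup : ∀ a a', s (.inl a) (.inl a') ↔ row a = row a')
    (hthr : ∀ a, (∃ i, s (.inl a) (.inr i)) ↔ row a ∈ T) (h : (leaders row T).card = n) :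
    s = buildingOf h := by
  choose ψ hψ using hs.exists_isLeast
  have hψ_eq : ψ = (leaders row T).orderEmbOfFin h :=
    Finset.orderEmbOfFin_unique h (fun i => (mem_leaders_iff_isLeast hup hthr).2 ⟨i, hψ i⟩)
      (hs.strictMono hψ)
  have hclass : ∀ i, leaderClass h i = row (ψ i) := fun i => by rw [hψ_eq]; rfl
  refine Setoid.sum_ext hup (fun a i => ?_) fun i j => ?_
  · change _ ↔ row a = leaderClass h i
    rw [hclass, ← hup]
    exact ⟨fun h => s.trans' h (s.symm' (hψ i).1), fun h => s.trans' h (hψ i).1⟩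
  · change _ ↔ leaderClass h i = leaderClass h j
    rw [LowerSeparated.rel_iff hs.1, (leaderClass_injective h).eq_iff]

end BuildingUnique

section Cancellation

variable {k l n : ℕ} {q : PP l n} {r r' : PP n n} {s : PP k n}

theorem rel_of_compP_swapP_compP_eq (hq : isBuilding q) (hs : isBuilding s)
    (hr : LowerSeparated r) (hr' : LowerSeparated r')
    (h : compP (swapP q) (compP r s) = compP (swapP q) (compP r' s)) {i j : Fin n}
    (hij : r (.inl i) (.inr j)) : r' (.inl i) (.inr j) := by
  obtain ⟨a, ha⟩ := hs.2.1 i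
  obtain ⟨b, hb⟩ := hq.2.1 j
  have hab := (compP_swapP_compP_rel_inl_inr hs.1 hr a b).2 ⟨i, j, ha, hij, hb⟩
  rw [h, compP_swapP_compP_rel_inl_inr hs.1 hr'] at hab
  obtain ⟨i', j', ha', hij', hb'⟩ := hab
  rwa [hs.1 i' i (s.trans' (s.symm' ha') ha), hq.1 j' j (q.trans' (q.symm' hb') hb)] at hij'

theorem eq_of_compP_swapP_compP_eq (hq : isBuilding q) (hr : isThrough r) (hr' : isThrough r')
    (hs : isBuilding s) (h : compP (swapP q) (compP r s) = compP (swapP q) (compP r' s)) :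
    r = r' := by
  refine Setoid.sum_ext (fun i i' => ?_) (fun i j => ⟨?_, ?_⟩) fun j j' => ?_
  · rw [UpperSeparated.rel_iff hr.2.1, UpperSeparated.rel_iff hr'.2.1]
  · exact rel_of_compP_swapP_compP_eq hq hs hr.2.2 hr'.2.2 h
  · exact rel_of_compP_swapP_compP_eq hq hs hr'.2.2 hr.2.2 h.symm
  · rw [LowerSeparated.rel_iff hr.2.2, LowerSeparated.rel_iff hr'.2.2]

end Cancellation

theorem tP_le_bP {k l : ℕ} (p : PP k l) : tP p ≤ bP p :=
  Nat.card_le_card_of_injective Subtype.val Subtype.val_injective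

section Decomposition

variable {k l : ℕ} (p : PP k l)

def upperClass (a : Fin k) : Quotient p := Quotient.mk p (.inl a)

def lowerClass (b : Fin l) : Quotient p := Quotient.mk p (.inr b)

def throughClasses : Set (Quotient p) := range (upperClass p) ∩ range (lowerClass p)

theorem card_leaders_upperClass : (leaders (upperClass p) (throughClasses p)).card = tP p :=
  card_leaders inter_subset_left

theorem card_leaders_lowerClass : (leaders (lowerClass p) (throughClasses p)).card = tP p :=
  card_leaders inter_subset_right

noncomputable def upperBuilding : PP k (tP p) := buildingOf (card_leaders_upperClass p)

noncomputable def lowerBuilding : PP l (tP p) := buildingOf (card_leaders_lowerClass p)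

noncomputable def throughPart : PP (tP p) (tP p) :=
  Setoid.ker (Sum.elim (leaderClass (card_leaders_upperClass p))
    (leaderClass (card_leaders_lowerClass p)))

theorem isBuilding_upperBuilding : isBuilding (upperBuilding p) := isBuilding_buildingOf _

theorem isBuilding_lowerBuilding : isBuilding (lowerBuilding p) := isBuilding_buildingOf _

theorem isThrough_throughPart : isThrough (throughPart p) :=
  isThrough_ker (leaderClass_injective _) (leaderClass_injective _)
    ((range_leaderClass _ inter_subset_left).trans (range_leaderClass _ inter_subset_right).symm)

theorem compP_swapP_lowerBuilding_compP_throughPart_upperBuilding :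
    compP (swapP (lowerBuilding p)) (compP (throughPart p) (upperBuilding p)) = p := by
  have hs := (isBuilding_upperBuilding p).1
  have hr := isThrough_throughPart p
  have hq := (isBuilding_lowerBuilding p).1
  refine Setoid.sum_ext (fun a a' => ?_) (fun a b => ?_) fun b b' => ?_
  · exact (compP_swapP_compP_rel_inl_inl hs hr.2.1 hr.2.2 hq a a').trans Quotient.eq
  · refine (compP_swapP_compP_rel_inl_inr hs hr.2.2 a b).trans ⟨?_, fun hab => ?_⟩
    · rintro ⟨i, j, hi, hij, hj⟩
      exact Quotient.eq.1 (hi.trans (hij.trans hj.symm))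
    · have hab : upperClass p a = lowerClass p b := Quotient.sound hab
      have hT : upperClass p a ∈ throughClasses p := ⟨⟨a, rfl⟩, b, hab.symm⟩
      obtain ⟨i, hi⟩ : upperClass p a ∈ range (leaderClass (card_leaders_upperClass p)) := by
        rwa [range_leaderClass (card_leaders_upperClass p) inter_subset_left]
      obtain ⟨j, hj⟩ : lowerClass p b ∈ range (leaderClass (card_leaders_lowerClass p)) := by
        rwa [range_leaderClass (card_leaders_lowerClass p) inter_subset_right, ← hab]
      exact ⟨i, j, hi.symm, hi.trans (hab.trans hj.symm), hj.symm⟩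
  · exact (compP_swapP_compP_rel_inr_inr hs hr.2.2 b b').trans Quotient.eq

theorem bP_upperBuilding : bP (upperBuilding p) = Nat.card (range (upperClass p)) :=
  bP_buildingOf (card_leaders_upperClass p) inter_subset_left

theorem bP_lowerBuilding : bP (lowerBuilding p) = Nat.card (range (lowerClass p)) :=
  bP_buildingOf (card_leaders_lowerClass p) inter_subset_right

theorem bP_add_tP : bP p + tP p = bP (lowerBuilding p) + bP (upperBuilding p) := by
  have hunion : range (upperClass p) ∪ range (lowerClass p) = univ := by
    refine eq_univ_of_forall fun c => ?_
    obtain ⟨a | b, rfl⟩ := Quotient.exists_rep c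
    exacts [.inl ⟨a, rfl⟩, .inr ⟨b, rfl⟩]
  have hbP : bP p = (range (upperClass p) ∪ range (lowerClass p)).ncard := by
    rw [hunion, ncard_univ]
    rfl
  have htP : tP p = (range (upperClass p) ∩ range (lowerClass p)).ncard := rfl
  rw [bP_upperBuilding, bP_lowerBuilding, hbP, htP, Nat.card_coe_set_eq, Nat.card_coe_set_eq,
    add_comm (range (lowerClass p)).ncard]
  exact ncard_union_add_ncard_inter (range (upperClass p)) (range (lowerClass p))

theorem betaP_eq_add : betaP p = betaP (lowerBuilding p) + betaP (upperBuilding p) := by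
  have := bP_add_tP p
  have := tP_le_bP p
  have := tP_le_bP (lowerBuilding p)
  have := tP_le_bP (upperBuilding p)
  have := tP_of_isBuilding (isBuilding_lowerBuilding p)
  have := tP_of_isBuilding (isBuilding_upperBuilding p)
  unfold betaP
  omega

variable {p} {m : ℕ} {q : PP l m} {r : PP m m} {s : PP k m}

theorem upperClass_eq_lowerClass_iff (hr : isThrough r) (hs : isBuilding s)
    (h : p = compP (swapP q) (compP r s)) (a : Fin k) (b : Fin l) :
    upperClass p a = lowerClass p b ↔
      ∃ i j, s (.inl a) (.inr i) ∧ r (.inl i) (.inr j) ∧ q (.inl b) (.inr j) := by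
  rw [upperClass, lowerClass, Quotient.eq, h, compP_swapP_compP_rel_inl_inr hs.1 hr.2.2]

theorem exists_rel_inr_iff_upperClass_mem (hq : isBuilding q) (hr : isThrough r)
    (hs : isBuilding s) (h : p = compP (swapP q) (compP r s)) (a : Fin k) :
    (∃ i, s (.inl a) (.inr i)) ↔ upperClass p a ∈ throughClasses p := by
  constructor
  · rintro ⟨i, hi⟩
    obtain ⟨j, hij⟩ := hr.exists_rel_inr i
    obtain ⟨b, hb⟩ := hq.2.1 j
    exact ⟨⟨a, rfl⟩, b, ((upperClass_eq_lowerClass_iff hr hs h a b).2 ⟨i, j, hi, hij, hb⟩).symm⟩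
  · rintro ⟨-, b, hb⟩
    obtain ⟨i, -, hi, -⟩ := (upperClass_eq_lowerClass_iff hr hs h a b).1 hb.symm
    exact ⟨i, hi⟩

theorem exists_rel_inr_iff_lowerClass_mem (hr : isThrough r)
    (hs : isBuilding s) (h : p = compP (swapP q) (compP r s)) (b : Fin l) :
    (∃ j, q (.inl b) (.inr j)) ↔ lowerClass p b ∈ throughClasses p := by
  constructor
  · rintro ⟨j, hj⟩
    obtain ⟨i, hij⟩ := hr.exists_inl_rel j
    obtain ⟨a, ha⟩ := hs.2.1 i
    exact ⟨⟨a, (upperClass_eq_lowerClass_iff hr hs h a b).2 ⟨i, j, ha, hij, hj⟩⟩, b, rfl⟩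
  · rintro ⟨⟨a, ha⟩, -⟩
    obtain ⟨-, j, -, -, hj⟩ := (upperClass_eq_lowerClass_iff hr hs h a b).1 ha
    exact ⟨j, hj⟩

theorem decomposition_unique (hq : isBuilding q) (hr : isThrough r) (hs : isBuilding s)
    (h : p = compP (swapP q) (compP r s)) :
    m = tP p ∧ HEq q (lowerBuilding p) ∧ HEq r (throughPart p) ∧ HEq s (upperBuilding p) := by
  have upper : ∀ a a', s (.inl a) (.inl a') ↔ upperClass p a = upperClass p a' := fun a a' => by
    rw [upperClass, upperClass, Quotient.eq, h,
      compP_swapP_compP_rel_inl_inl hs.1 hr.2.1 hr.2.2 hq.1]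
  have lower : ∀ b b', q (.inl b) (.inl b') ↔ lowerClass p b = lowerClass p b' := fun b b' => by
    rw [lowerClass, lowerClass, Quotient.eq, h, compP_swapP_compP_rel_inr_inr hs.1 hr.2.2]
  have upperThrough := exists_rel_inr_iff_upperClass_mem hq hr hs h
  have lowerThrough := exists_rel_inr_iff_lowerClass_mem hr hs h
  obtain rfl : m = tP p :=
    (card_leaders_of_isBuilding hs upper upperThrough).symm.trans (card_leaders_upperClass p)
  obtain rfl : s = upperBuilding p := eq_buildingOf hs upper upperThrough _
  obtain rfl : q = lowerBuilding p := eq_buildingOf hq lower lowerThrough _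
  refine ⟨rfl, .rfl, heq_of_eq (eq_of_compP_swapP_compP_eq hq hr (isThrough_throughPart p) hs ?_),
    .rfl⟩
  rw [← h, compP_swapP_lowerBuilding_compP_throughPart_upperBuilding]

end Decomposition

/-- existence and uniqueness of the through-block decomposition
`p = q* r s`, together with the loop and block counting formulae. -/
theorem through_block_decomposition {k l : ℕ} (p : PP k l) :
    ∃ (q : PP l (tP p)) (r : PP (tP p) (tP p)) (s : PP k (tP p)),
      isBuilding q ∧ isThrough r ∧ isBuilding s ∧
      p = compP (swapP q) (compP r s) ∧
      rlP r s = 0 ∧ rlP (swapP q) (compP r s) = 0 ∧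
      bP p + tP p = bP q + bP s ∧
      betaP p = betaP q + betaP s ∧
      (∀ (m : ℕ) (q' : PP l m) (r' : PP m m) (s' : PP k m),
        isBuilding q' → isThrough r' → isBuilding s' →
        p = compP (swapP q') (compP r' s') →
        m = tP p ∧ HEq q' q ∧ HEq r' r ∧ HEq s' s) :=
  ⟨lowerBuilding p, throughPart p, upperBuilding p, isBuilding_lowerBuilding p,
    isThrough_throughPart p, isBuilding_upperBuilding p,
    (compP_swapP_lowerBuilding_compP_throughPart_upperBuilding p).symm,
    rlP_eq_zero_of_isBuilding (isBuilding_upperBuilding p) _,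
    rlP_swapP_eq_zero_of_isBuilding (isBuilding_lowerBuilding p) _, bP_add_tP p, betaP_eq_add p,
    fun _ _ _ _ hq hr hs h => decomposition_unique hq hr hs h⟩
end

section
/- For any partition p ∈ P(k,l) with through-block decomposition p = q*rs, the compositions satisfy p*p = s*s and pp* = q*q; both p*p and pp* are projective partitions with t(p*p) = t(pp*) = t(p); furthermore pp*p = p and β(p) = rl(p*, p) + rl(p, p*). -/
/-! ### Auxiliary development -/

section Aux

open Sum Relation

variable {k l m n : ℕ}

lemma swapP_r {p : PP k l} {x y : Fin l ⊕ Fin k} :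
    (swapP p).r x y ↔ p.r (Sum.swap x) (Sum.swap y) := Iff.rfl

theorem swapP_swapP (p : PP k l) : swapP (swapP p) = p :=
  Setoid.ext fun x y => by
    simpa [swapP_r] using Iff.rfl

section BigChar

variable (v : PP k n) (w : PP n m)

/-- Join of the two middle relations. -/
def MrelX : Fin n → Fin n → Prop :=
  Relation.EqvGen fun j j' => v.r (Sum.inr j) (Sum.inr j') ∨ w.r (Sum.inl j) (Sum.inl j')

variable {v w}

lemma MrelX.refl (j : Fin n) : MrelX v w j j := Relation.EqvGen.refl j

lemma MrelX.symm {j j' : Fin n} (h : MrelX v w j j') : MrelX v w j' j :=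
  Relation.EqvGen.symm _ _ h

lemma MrelX.trans {a b c : Fin n} (h1 : MrelX v w a b) (h2 : MrelX v w b c) :
    MrelX v w a c := Relation.EqvGen.trans _ _ _ h1 h2

lemma MrelX.of_left {j j' : Fin n} (h : v.r (Sum.inr j) (Sum.inr j')) : MrelX v w j j' :=
  Relation.EqvGen.rel _ _ (Or.inl h)

lemma MrelX.of_right {j j' : Fin n} (h : w.r (Sum.inl j) (Sum.inl j')) : MrelX v w j j' :=
  Relation.EqvGen.rel _ _ (Or.inr h)

variable (v w)

/-- `touchX x j` : the point `x` is linked to the middle point `j`. -/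
def touchX : (Fin k ⊕ (Fin n ⊕ Fin m)) → Fin n → Prop
  | Sum.inl a, j => v.r (Sum.inl a) (Sum.inr j)
  | Sum.inr (Sum.inl j0), j => MrelX v w j0 j
  | Sum.inr (Sum.inr b), j => w.r (Sum.inl j) (Sum.inr b)

/-- Row-internal relation. -/
def sideX : (Fin k ⊕ (Fin n ⊕ Fin m)) → (Fin k ⊕ (Fin n ⊕ Fin m)) → Prop
  | Sum.inl a, Sum.inl a' => v.r (Sum.inl a) (Sum.inl a')
  | Sum.inr (Sum.inl j), Sum.inr (Sum.inl j') => MrelX v w j j'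
  | Sum.inr (Sum.inr b), Sum.inr (Sum.inr b') => w.r (Sum.inr b) (Sum.inr b')
  | _, _ => False

/-- Explicit description of the relation generated in the composition. -/
def BigE (x y : Fin k ⊕ (Fin n ⊕ Fin m)) : Prop :=
  sideX v w x y ∨ ∃ j j', touchX v w x j ∧ MrelX v w j j' ∧ touchX v w y j'

variable {v w}

lemma touchX_unique {x : Fin k ⊕ (Fin n ⊕ Fin m)} {j j' : Fin n}
    (h1 : touchX v w x j) (h2 : touchX v w x j') : MrelX v w j j' := by
  rcases x with a | (j0 | b)
  · exact MrelX.of_left (v.iseqv.trans (v.iseqv.symm h1) h2)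
  · exact MrelX.trans (MrelX.symm h1) h2
  · exact MrelX.of_right (w.iseqv.trans h1 (w.iseqv.symm h2))

lemma sideX_touch {x y : Fin k ⊕ (Fin n ⊕ Fin m)} {j : Fin n}
    (h : sideX v w x y) (ht : touchX v w y j) : touchX v w x j := by
  rcases x with a | (j0 | b) <;> rcases y with a' | (j0' | b') <;>
    simp only [sideX, touchX] at *
  · exact v.iseqv.trans h ht
  · exact MrelX.trans h ht
  · exact w.iseqv.trans ht (w.iseqv.symm h)

lemma sideX_refl (x : Fin k ⊕ (Fin n ⊕ Fin m)) : sideX v w x x := by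
  rcases x with a | (j0 | b)
  · exact v.iseqv.refl _
  · exact MrelX.refl _
  · exact w.iseqv.refl _

lemma sideX_symm {x y : Fin k ⊕ (Fin n ⊕ Fin m)} (h : sideX v w x y) : sideX v w y x := by
  rcases x with a | (j0 | b) <;> rcases y with a' | (j0' | b') <;>
    simp only [sideX] at *
  · exact v.iseqv.symm h
  · exact MrelX.symm h
  · exact w.iseqv.symm h

lemma sideX_trans {x y z : Fin k ⊕ (Fin n ⊕ Fin m)}
    (h1 : sideX v w x y) (h2 : sideX v w y z) : sideX v w x z := by
  rcases x with a | (j0 | b) <;> rcases y with a' | (j0' | b') <;>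
    rcases z with a'' | (j0'' | b'') <;> simp only [sideX] at *
  · exact v.iseqv.trans h1 h2
  · exact MrelX.trans h1 h2
  · exact w.iseqv.trans h1 h2

lemma BigE_refl (x : Fin k ⊕ (Fin n ⊕ Fin m)) : BigE v w x x := Or.inl (sideX_refl x)

lemma BigE_symm {x y} (h : BigE v w x y) : BigE v w y x := by
  rcases h with h | ⟨j, j', h1, h2, h3⟩
  · exact Or.inl (sideX_symm h)
  · exact Or.inr ⟨j', j, h3, MrelX.symm h2, h1⟩

lemma BigE_trans {x y z} (h1 : BigE v w x y) (h2 : BigE v w y z) : BigE v w x z := by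
  rcases h1 with h1 | ⟨j, j', ha, hm, hb⟩
  · rcases h2 with h2 | ⟨j, j', ha, hm, hb⟩
    · exact Or.inl (sideX_trans h1 h2)
    · exact Or.inr ⟨j, j', sideX_touch h1 ha, hm, hb⟩
  · rcases h2 with h2 | ⟨j2, j2', ha2, hm2, hb2⟩
    · exact Or.inr ⟨j, j', ha, hm, sideX_touch (sideX_symm h2) hb⟩
    · exact Or.inr ⟨j, j2', ha, MrelX.trans hm (MrelX.trans (touchX_unique hb ha2) hm2), hb2⟩

lemma gen_left {a b : Fin k ⊕ Fin n} (h : v.r a b) :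
    (bigS v w).r (Sum.map id Sum.inl a) (Sum.map id Sum.inl b) :=
  Relation.EqvGen.rel _ _ (Or.inl ⟨a, b, h, rfl, rfl⟩)

lemma gen_right {a b : Fin n ⊕ Fin m} (h : w.r a b) :
    (bigS v w).r (Sum.inr a) (Sum.inr b) :=
  Relation.EqvGen.rel _ _ (Or.inr ⟨a, b, h, rfl, rfl⟩)

lemma bigS_of_M {j j' : Fin n} (h : MrelX v w j j') :
    (bigS v w).r (Sum.inr (Sum.inl j)) (Sum.inr (Sum.inl j')) := by
  induction h with
  | rel a b h =>
      rcases h with h | h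
      · exact gen_left (v := v) (w := w) (a := Sum.inr a) (b := Sum.inr b) h
      · exact gen_right (w := w) (a := Sum.inl a) (b := Sum.inl b) h
  | refl a => exact (bigS v w).iseqv.refl _
  | symm a b _ ih => exact (bigS v w).iseqv.symm ih
  | trans a b c _ _ ih1 ih2 => exact (bigS v w).iseqv.trans ih1 ih2

lemma bigS_of_touch {x : Fin k ⊕ (Fin n ⊕ Fin m)} {j : Fin n} (h : touchX v w x j) :
    (bigS v w).r x (Sum.inr (Sum.inl j)) := by
  rcases x with a | (j0 | b)
  · exact gen_left (v := v) (w := w) (a := Sum.inl a) (b := Sum.inr j) h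
  · exact bigS_of_M h
  · exact (bigS v w).iseqv.symm
      (gen_right (w := w) (a := Sum.inl j) (b := Sum.inr b) h)

theorem bigS_r_iff (x y : Fin k ⊕ (Fin n ⊕ Fin m)) :
    (bigS v w).r x y ↔ BigE v w x y := by
  constructor
  · intro h
    induction h with
    | rel a b h =>
        rcases h with ⟨a0, b0, hab, rfl, rfl⟩ | ⟨a0, b0, hab, rfl, rfl⟩
        · rcases a0 with a1 | j1
          · rcases b0 with a2 | j2
            · exact Or.inl hab
            · exact Or.inr ⟨j2, j2, hab, MrelX.refl _, MrelX.refl _⟩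
          · rcases b0 with a2 | j2
            · exact Or.inr ⟨j1, j1, MrelX.refl _, MrelX.refl _, v.iseqv.symm hab⟩
            · exact Or.inl (MrelX.of_left hab)
        · rcases a0 with j1 | c1
          · rcases b0 with j2 | c2
            · exact Or.inl (MrelX.of_right hab)
            · exact Or.inr ⟨j1, j1, MrelX.refl _, MrelX.refl _, hab⟩
          · rcases b0 with j2 | c2
            · exact Or.inr ⟨j2, j2, w.iseqv.symm hab, MrelX.refl _, MrelX.refl _⟩
            · exact Or.inl hab
    | refl a => exact BigE_refl a
    | symm a b _ ih => exact BigE_symm ih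
    | trans a b c _ _ ih1 ih2 => exact BigE_trans ih1 ih2
  · intro h
    rcases h with h | ⟨j, j', h1, h2, h3⟩
    · rcases x with a | (j0 | b) <;> rcases y with a' | (j0' | b') <;>
        simp only [sideX] at h
      · exact gen_left (v := v) (w := w) (a := Sum.inl a) (b := Sum.inl a') h
      · exact bigS_of_M h
      · exact gen_right (w := w) (a := Sum.inr b) (b := Sum.inr b') h
    · exact (bigS v w).iseqv.trans (bigS_of_touch h1)
        ((bigS v w).iseqv.trans (bigS_of_M h2) ((bigS v w).iseqv.symm (bigS_of_touch h3)))

theorem compP_r_iff {x y : Fin k ⊕ Fin m} :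
    (compP w v).r x y ↔ BigE v w (Sum.map id Sum.inr x) (Sum.map id Sum.inr y) :=
  bigS_r_iff _ _

theorem compP_inl_inl {a a' : Fin k} :
    (compP w v).r (Sum.inl a) (Sum.inl a') ↔
      (v.r (Sum.inl a) (Sum.inl a') ∨
        ∃ j j', v.r (Sum.inl a) (Sum.inr j) ∧ MrelX v w j j' ∧ v.r (Sum.inl a') (Sum.inr j')) :=
  compP_r_iff

theorem compP_inl_inr {a : Fin k} {b : Fin m} :
    (compP w v).r (Sum.inl a) (Sum.inr b) ↔
      ∃ j j', v.r (Sum.inl a) (Sum.inr j) ∧ MrelX v w j j' ∧ w.r (Sum.inl j') (Sum.inr b) := by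
  have := compP_r_iff (v := v) (w := w) (x := Sum.inl a) (y := Sum.inr b)
  simpa [BigE, sideX, touchX] using this

theorem compP_inr_inr {b b' : Fin m} :
    (compP w v).r (Sum.inr b) (Sum.inr b') ↔
      (w.r (Sum.inr b) (Sum.inr b') ∨
        ∃ j j', w.r (Sum.inl j) (Sum.inr b) ∧ MrelX v w j j' ∧ w.r (Sum.inl j') (Sum.inr b')) :=
  compP_r_iff

theorem bigS_mid_mid {j j' : Fin n} :
    (bigS v w).r (Sum.inr (Sum.inl j)) (Sum.inr (Sum.inl j')) ↔ MrelX v w j j' := by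
  rw [bigS_r_iff]
  constructor
  · rintro (h | ⟨j1, j2, h1, h2, h3⟩)
    · exact h
    · exact MrelX.trans h1 (MrelX.trans h2 (MrelX.symm h3))
  · exact fun h => Or.inl h

theorem bigS_inl_mid {a : Fin k} {j : Fin n} :
    (bigS v w).r (Sum.inl a) (Sum.inr (Sum.inl j)) ↔
      ∃ j0, v.r (Sum.inl a) (Sum.inr j0) ∧ MrelX v w j0 j := by
  rw [bigS_r_iff]
  constructor
  · rintro (h | ⟨j1, j2, h1, h2, h3⟩)
    · exact absurd h (by simp [sideX])
    · exact ⟨j1, h1, MrelX.trans h2 (MrelX.symm h3)⟩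
  · rintro ⟨j0, h1, h2⟩
    exact Or.inr ⟨j0, j, h1, h2, MrelX.refl _⟩

theorem bigS_bot_mid {b : Fin m} {j : Fin n} :
    (bigS v w).r (Sum.inr (Sum.inr b)) (Sum.inr (Sum.inl j)) ↔
      ∃ j0, w.r (Sum.inl j0) (Sum.inr b) ∧ MrelX v w j0 j := by
  rw [bigS_r_iff]
  constructor
  · rintro (h | ⟨j1, j2, h1, h2, h3⟩)
    · exact absurd h (by simp [sideX])
    · exact ⟨j1, h1, MrelX.trans h2 (MrelX.symm h3)⟩
  · rintro ⟨j0, h1, h2⟩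
    exact Or.inr ⟨j0, j, h1, h2, MrelX.refl _⟩

theorem MrelX_iff {R : Fin n → Fin n → Prop} (hR : Equivalence R)
    (h1 : ∀ j j', v.r (Sum.inr j) (Sum.inr j') → R j j')
    (h2 : ∀ j j', w.r (Sum.inl j) (Sum.inl j') → R j j')
    (h3 : ∀ j j', R j j' → MrelX v w j j') {j j' : Fin n} :
    MrelX v w j j' ↔ R j j' := by
  constructor
  · intro h
    induction h with
    | rel a b h => rcases h with h | h; exacts [h1 _ _ h, h2 _ _ h]
    | refl a => exact hR.refl a
    | symm a b _ ih => exact hR.symm ih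
    | trans a b c _ _ ih1 ih2 => exact hR.trans ih1 ih2
  · exact h3 _ _

end BigChar

end Aux


section Star

open Sum

variable {k l n : ℕ}

lemma PP_ext {p p' : PP k l}
    (h1 : ∀ a a', p.r (Sum.inl a) (Sum.inl a') ↔ p'.r (Sum.inl a) (Sum.inl a'))
    (h2 : ∀ a b, p.r (Sum.inl a) (Sum.inr b) ↔ p'.r (Sum.inl a) (Sum.inr b))
    (h3 : ∀ b b', p.r (Sum.inr b) (Sum.inr b') ↔ p'.r (Sum.inr b) (Sum.inr b')) : p = p' := by
  apply Setoid.ext; intro x y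
  rcases x with a | b <;> rcases y with a' | b'
  · exact h1 a a'
  · exact h2 a b'
  · exact ⟨fun h => p'.iseqv.symm ((h2 a' b).mp (p.iseqv.symm h)),
      fun h => p.iseqv.symm ((h2 a' b).mpr (p'.iseqv.symm h))⟩
  · exact h3 b b'

variable (u : PP k n)

/-- Explicit relation of `u* u`. -/
def StarRel : (Fin k ⊕ Fin k) → (Fin k ⊕ Fin k) → Prop
  | Sum.inl x, Sum.inl y => u.r (Sum.inl x) (Sum.inl y)
  | Sum.inl x, Sum.inr y => ∃ j, u.r (Sum.inl x) (Sum.inr j) ∧ u.r (Sum.inl y) (Sum.inr j)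
  | Sum.inr x, Sum.inl y => ∃ j, u.r (Sum.inl x) (Sum.inr j) ∧ u.r (Sum.inl y) (Sum.inr j)
  | Sum.inr x, Sum.inr y => u.r (Sum.inl x) (Sum.inl y)

variable {u}

lemma Mstar {j j' : Fin n} : MrelX u (swapP u) j j' ↔ u.r (Sum.inr j) (Sum.inr j') :=
  MrelX_iff (R := fun j j' => u.r (Sum.inr j) (Sum.inr j')) ⟨fun _ => u.iseqv.refl _, fun h => u.iseqv.symm h, fun h1 h2 => u.iseqv.trans h1 h2⟩
    (fun _ _ h => h) (fun _ _ h => h) (fun _ _ h => MrelX.of_left h)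

variable (u)

theorem star_r (x y : Fin k ⊕ Fin k) :
    (compP (swapP u) u).r x y ↔ StarRel u x y := by
  rcases x with a | a <;> rcases y with b | b
  · rw [compP_inl_inl]
    constructor
    · rintro (h | ⟨j, j', h1, h2, h3⟩)
      · exact h
      · exact u.iseqv.trans h1 (u.iseqv.trans (Mstar.mp h2) (u.iseqv.symm h3))
    · exact Or.inl
  · rw [compP_inl_inr]
    constructor
    · rintro ⟨j, j', h1, h2, h3⟩
      exact ⟨j, h1, u.iseqv.trans (u.iseqv.symm h3) (u.iseqv.symm (Mstar.mp h2))⟩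
    · rintro ⟨j, h1, h2⟩
      exact ⟨j, j, h1, MrelX.refl _, u.iseqv.symm h2⟩
  · have e : (compP (swapP u) u).r (Sum.inr a) (Sum.inl b) ↔
        (compP (swapP u) u).r (Sum.inl b) (Sum.inr a) :=
      ⟨(compP (swapP u) u).iseqv.symm, (compP (swapP u) u).iseqv.symm⟩
    rw [e, compP_inl_inr]
    constructor
    · rintro ⟨j, j', h1, h2, h3⟩
      exact ⟨j, u.iseqv.trans (u.iseqv.symm h3) (u.iseqv.symm (Mstar.mp h2)), h1⟩
    · rintro ⟨j, h1, h2⟩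
      exact ⟨j, j, h2, MrelX.refl _, u.iseqv.symm h1⟩
  · rw [compP_inr_inr]
    constructor
    · rintro (h | ⟨j, j', h1, h2, h3⟩)
      · exact h
      · exact u.iseqv.trans (u.iseqv.symm h1) (u.iseqv.trans (Mstar.mp h2) h3)
    · exact Or.inl

theorem star_symm : swapP (compP (swapP u) u) = compP (swapP u) u := by
  apply Setoid.ext; intro x y
  have e : (swapP (compP (swapP u) u)).r x y ↔
      (compP (swapP u) u).r (Sum.swap x) (Sum.swap y) := Iff.rfl
  rw [e, star_r, star_r]
  rcases x with a | a <;> rcases y with b | b <;> exact Iff.rfl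

lemma Mstar2 {j j' : Fin k} :
    MrelX (compP (swapP u) u) (compP (swapP u) u) j j' ↔ u.r (Sum.inl j) (Sum.inl j') :=
  MrelX_iff (R := fun j j' => u.r (Sum.inl j) (Sum.inl j')) ⟨fun _ => u.iseqv.refl _, fun h => u.iseqv.symm h, fun h1 h2 => u.iseqv.trans h1 h2⟩
    (fun _ _ h => (star_r u _ _).mp h) (fun _ _ h => (star_r u _ _).mp h)
    (fun _ _ h => MrelX.of_left ((star_r u _ _).mpr h))

theorem star_idem :
    compP (compP (swapP u) u) (compP (swapP u) u) = compP (swapP u) u := by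
  apply PP_ext
  · intro a a'
    rw [compP_inl_inl]
    constructor
    · rintro (h | ⟨j, j', h1, h2, h3⟩)
      · exact h
      · obtain ⟨c, hac, hjc⟩ := (star_r u _ _).mp h1
        obtain ⟨c', ha'c', hj'c'⟩ := (star_r u _ _).mp h3
        refine (star_r u _ _).mpr ?_
        show u.r (Sum.inl a) (Sum.inl a')
        exact u.iseqv.trans (u.iseqv.trans hac (u.iseqv.symm hjc))
          (u.iseqv.trans (Mstar2 u |>.mp h2)
            (u.iseqv.trans hj'c' (u.iseqv.symm ha'c')))
    · exact Or.inl
  · intro a b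
    rw [compP_inl_inr]
    constructor
    · rintro ⟨j, j', h1, h2, h3⟩
      obtain ⟨c, hac, hjc⟩ := (star_r u _ _).mp h1
      obtain ⟨c', hj'c', hbc'⟩ := (star_r u _ _).mp h3
      refine (star_r u _ _).mpr ?_
      show ∃ c, u.r (Sum.inl a) (Sum.inr c) ∧ u.r (Sum.inl b) (Sum.inr c)
      refine ⟨c, hac, ?_⟩
      exact u.iseqv.trans
        (u.iseqv.trans (u.iseqv.trans hbc' (u.iseqv.symm hj'c')) (u.iseqv.symm ((Mstar2 u).mp h2)))
        hjc
    · intro h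
      obtain ⟨c, hac, hbc⟩ := (star_r u _ _).mp h
      refine ⟨a, b, (star_r u _ _).mpr ⟨c, hac, hac⟩,
        (Mstar2 u).mpr (u.iseqv.trans hac (u.iseqv.symm hbc)), (star_r u _ _).mpr ⟨c, hbc, hbc⟩⟩
  · intro b b'
    rw [compP_inr_inr]
    constructor
    · rintro (h | ⟨j, j', h1, h2, h3⟩)
      · exact h
      · obtain ⟨c, hjc, hbc⟩ := (star_r u _ _).mp h1
        obtain ⟨c', hj'c', hb'c'⟩ := (star_r u _ _).mp h3
        refine (star_r u _ _).mpr ?_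
        show u.r (Sum.inl b) (Sum.inl b')
        exact u.iseqv.trans (u.iseqv.trans hbc (u.iseqv.symm hjc))
          (u.iseqv.trans ((Mstar2 u).mp h2) (u.iseqv.trans hj'c' (u.iseqv.symm hb'c')))
    · exact Or.inl

theorem star_projective : isProjective (compP (swapP u) u) :=
  ⟨star_symm u, star_idem u⟩

lemma Mstar3 {u : PP k l} {j j' : Fin k} :
    MrelX (compP (swapP u) u) u j j' ↔ u.r (Sum.inl j) (Sum.inl j') :=
  MrelX_iff (R := fun j j' => u.r (Sum.inl j) (Sum.inl j')) ⟨fun _ => u.iseqv.refl _, fun h => u.iseqv.symm h, fun h1 h2 => u.iseqv.trans h1 h2⟩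
    (fun _ _ h => (star_r u _ _).mp h) (fun _ _ h => h)
    (fun _ _ h => MrelX.of_right h)

theorem comp_star_self (u : PP k l) : compP u (compP (swapP u) u) = u := by
  apply PP_ext
  · intro a a'
    rw [compP_inl_inl]
    constructor
    · rintro (h | ⟨j, j', h1, h2, h3⟩)
      · exact (star_r u _ _).mp h
      · obtain ⟨c, hac, hjc⟩ := (star_r u _ _).mp h1
        obtain ⟨c', ha'c', hj'c'⟩ := (star_r u _ _).mp h3
        exact u.iseqv.trans (u.iseqv.trans hac (u.iseqv.symm hjc))
          (u.iseqv.trans (Mstar3.mp h2) (u.iseqv.trans hj'c' (u.iseqv.symm ha'c')))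
    · exact fun h => Or.inl ((star_r u _ _).mpr h)
  · intro a b
    rw [compP_inl_inr]
    constructor
    · rintro ⟨j, j', h1, h2, h3⟩
      obtain ⟨c, hac, hjc⟩ := (star_r u _ _).mp h1
      exact u.iseqv.trans (u.iseqv.trans (u.iseqv.trans hac (u.iseqv.symm hjc)) (Mstar3.mp h2)) h3
    · intro h
      exact ⟨a, a, (star_r u _ _).mpr ⟨b, h, h⟩, Mstar3.mpr (u.iseqv.refl _), h⟩
  · intro b b'
    rw [compP_inr_inr]
    constructor
    · rintro (h | ⟨j, j', h1, h2, h3⟩)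
      · exact h
      · exact u.iseqv.trans (u.iseqv.symm h1) (u.iseqv.trans (Mstar3.mp h2) h3)
    · exact Or.inl

end Star


section Counting

open Sum

variable {k l n : ℕ}

lemma card_eq_of_quot {α β : Type*} (S : Setoid α) (g : α → β)
    (hresp : ∀ x y, S.r x y → g x = g y)
    (hinj : ∀ x y, g x = g y → S.r x y)
    (hsurj : Function.Surjective g) :
    Nat.card β = Nat.card (Quotient S) := by
  refine (Nat.card_congr (Equiv.ofBijective (Quotient.lift g hresp) ⟨?_, ?_⟩)).symm
  · intro c c'
    induction c using Quotient.ind with | _ x => ?_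
    induction c' using Quotient.ind with | _ y => ?_
    intro h
    exact Quotient.sound (hinj x y h)
  · intro b
    obtain ⟨x, hx⟩ := hsurj b
    exact ⟨Quotient.mk S x, hx⟩

theorem tP_star (u : PP k n) : tP (compP (swapP u) u) = tP u := by
  classical
  let A := {a : Fin k // ∃ j : Fin n, u.r (Sum.inl a) (Sum.inr j)}
  let SA : Setoid A := ⟨fun x y => u.r (Sum.inl x.1) (Sum.inl y.1),
     ⟨fun _ => u.iseqv.refl _, fun h => u.iseqv.symm h, fun h1 h2 => u.iseqv.trans h1 h2⟩⟩
  have h1 : tP u = Nat.card (Quotient SA) := by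
    apply card_eq_of_quot SA
      (g := fun x => (⟨Quotient.mk u (Sum.inl x.1),
        ⟨x.1, rfl⟩, ⟨x.2.choose, Quotient.sound (u.iseqv.symm x.2.choose_spec)⟩⟩ :
        {c : Quotient u // (∃ a : Fin k, Quotient.mk u (Sum.inl a) = c) ∧
          (∃ b : Fin n, Quotient.mk u (Sum.inr b) = c)}))
    · intro x y h
      exact Subtype.ext (Quotient.sound h)
    · intro x y h
      have h' := congrArg Subtype.val h
      simp only at h'
      have h2 : u.r (Sum.inl x.1) (Sum.inl y.1) := Quotient.exact h'
      exact h2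
    · rintro ⟨c, ⟨a, ha⟩, ⟨b, hb⟩⟩
      have hab : u.r (Sum.inl a) (Sum.inr b) := Quotient.exact (ha.trans hb.symm)
      exact ⟨⟨a, b, hab⟩, Subtype.ext ha⟩
  have h2 : tP (compP (swapP u) u) = Nat.card (Quotient SA) := by
    apply card_eq_of_quot SA
      (g := fun x => (⟨Quotient.mk (compP (swapP u) u) (Sum.inl x.1),
        ⟨x.1, rfl⟩, ⟨x.1, Quotient.sound ((star_r u _ _).mpr
          (⟨x.2.choose, x.2.choose_spec, x.2.choose_spec⟩ :
            StarRel u (Sum.inr x.1) (Sum.inl x.1)))⟩⟩ :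
        {c : Quotient (compP (swapP u) u) //
          (∃ a : Fin k, Quotient.mk _ (Sum.inl a) = c) ∧
          (∃ b : Fin k, Quotient.mk _ (Sum.inr b) = c)}))
    · intro x y h
      exact Subtype.ext (Quotient.sound ((star_r u _ _).mpr h))
    · intro x y h
      have h' := congrArg Subtype.val h
      simp only at h'
      exact (star_r u _ _).mp (Quotient.exact h')
    · rintro ⟨c, ⟨a, ha⟩, ⟨b, hb⟩⟩
      have hab : (compP (swapP u) u).r (Sum.inl a) (Sum.inr b) :=
        Quotient.exact (ha.trans hb.symm)
      obtain ⟨j, hj, _⟩ := (star_r u _ _).mp hab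
      exact ⟨⟨a, j, hj⟩, Subtype.ext ha⟩
  rw [h1, h2]

theorem tP_swap (u : PP k l) : tP (swapP u) = tP u := by
  classical
  let A := {b : Fin l // ∃ a : Fin k, u.r (Sum.inl a) (Sum.inr b)}
  let SA : Setoid A := ⟨fun x y => u.r (Sum.inr x.1) (Sum.inr y.1),
     ⟨fun _ => u.iseqv.refl _, fun h => u.iseqv.symm h, fun h1 h2 => u.iseqv.trans h1 h2⟩⟩
  have h1 : tP u = Nat.card (Quotient SA) := by
    apply card_eq_of_quot SA
      (g := fun x => (⟨Quotient.mk u (Sum.inr x.1),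
        ⟨x.2.choose, Quotient.sound x.2.choose_spec⟩, ⟨x.1, rfl⟩⟩ :
        {c : Quotient u // (∃ a : Fin k, Quotient.mk u (Sum.inl a) = c) ∧
          (∃ b : Fin l, Quotient.mk u (Sum.inr b) = c)}))
    · intro x y h
      exact Subtype.ext (Quotient.sound h)
    · intro x y h
      have h' := congrArg Subtype.val h
      simp only at h'
      have h2 : u.r (Sum.inr x.1) (Sum.inr y.1) := Quotient.exact h'
      exact h2
    · rintro ⟨c, ⟨a, ha⟩, ⟨b, hb⟩⟩
      have hab : u.r (Sum.inl a) (Sum.inr b) := Quotient.exact (ha.trans hb.symm)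
      exact ⟨⟨b, a, hab⟩, Subtype.ext hb⟩
  have h2 : tP (swapP u) = Nat.card (Quotient SA) := by
    apply card_eq_of_quot SA
      (g := fun x => (⟨Quotient.mk (swapP u) (Sum.inl x.1),
        ⟨x.1, rfl⟩,
        ⟨x.2.choose, Quotient.sound (show (swapP u).r (Sum.inr x.2.choose) (Sum.inl x.1) from
          x.2.choose_spec)⟩⟩ :
        {c : Quotient (swapP u) // (∃ a : Fin l, Quotient.mk _ (Sum.inl a) = c) ∧
          (∃ b : Fin k, Quotient.mk _ (Sum.inr b) = c)}))
    · intro x y h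
      exact Subtype.ext (Quotient.sound (show (swapP u).r (Sum.inl x.1) (Sum.inl y.1) from h))
    · intro x y h
      have h' := congrArg Subtype.val h
      simp only at h'
      have h2 : (swapP u).r (Sum.inl x.1) (Sum.inl y.1) := Quotient.exact h'
      exact h2
    · rintro ⟨c, ⟨b, hb⟩, ⟨a, ha⟩⟩
      have hab : (swapP u).r (Sum.inl b) (Sum.inr a) := Quotient.exact (hb.trans ha.symm)
      exact ⟨⟨b, a, u.iseqv.symm hab⟩, Subtype.ext hb⟩
  rw [h1, h2]

lemma card_split {α : Type*} [Finite α] (P : α → Prop) :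
    Nat.card α = Nat.card {x // P x} + Nat.card {x // ¬ P x} := by
  classical
  rw [← Nat.card_sum]
  exact (Nat.card_congr (Equiv.sumCompl P)).symm

theorem bP_split (u : PP k l) :
    bP u = tP u + Nat.card {c : Quotient u // ¬ ∃ b : Fin l, Quotient.mk u (Sum.inr b) = c}
         + Nat.card {c : Quotient u // ¬ ∃ a : Fin k, Quotient.mk u (Sum.inl a) = c} := by
  classical
  have total : ∀ c : Quotient u,
      (∃ a : Fin k, Quotient.mk u (Sum.inl a) = c) ∨ (∃ b : Fin l, Quotient.mk u (Sum.inr b) = c) := by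
    intro c
    induction c using Quotient.ind with | _ x => ?_
    rcases x with a | b
    · exact Or.inl ⟨a, rfl⟩
    · exact Or.inr ⟨b, rfl⟩
  have h1 : bP u = Nat.card {c : Quotient u // ∃ a : Fin k, Quotient.mk u (Sum.inl a) = c}
      + Nat.card {c : Quotient u // ¬ ∃ a : Fin k, Quotient.mk u (Sum.inl a) = c} := card_split _
  have h2 : Nat.card {c : Quotient u // ∃ a : Fin k, Quotient.mk u (Sum.inl a) = c}
      = Nat.card {d : {c : Quotient u // ∃ a : Fin k, Quotient.mk u (Sum.inl a) = c} //
          ∃ b : Fin l, Quotient.mk u (Sum.inr b) = d.1}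
      + Nat.card {d : {c : Quotient u // ∃ a : Fin k, Quotient.mk u (Sum.inl a) = c} //
          ¬ ∃ b : Fin l, Quotient.mk u (Sum.inr b) = d.1} := card_split _
  have e1 : Nat.card {d : {c : Quotient u // ∃ a : Fin k, Quotient.mk u (Sum.inl a) = c} //
          ∃ b : Fin l, Quotient.mk u (Sum.inr b) = d.1} = tP u := by
    exact Nat.card_congr (Equiv.subtypeSubtypeEquivSubtypeInter
      (fun c => ∃ a : Fin k, Quotient.mk u (Sum.inl a) = c)
      (fun c => ∃ b : Fin l, Quotient.mk u (Sum.inr b) = c))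
  have e2 : Nat.card {d : {c : Quotient u // ∃ a : Fin k, Quotient.mk u (Sum.inl a) = c} //
          ¬ ∃ b : Fin l, Quotient.mk u (Sum.inr b) = d.1}
      = Nat.card {c : Quotient u // ¬ ∃ b : Fin l, Quotient.mk u (Sum.inr b) = c} := by
    refine Nat.card_congr ((Equiv.subtypeSubtypeEquivSubtypeInter
      (fun c => ∃ a : Fin k, Quotient.mk u (Sum.inl a) = c)
      (fun c => ¬ ∃ b : Fin l, Quotient.mk u (Sum.inr b) = c)).trans
      (Equiv.subtypeEquivRight fun c => ⟨And.right, fun h => ⟨(total c).resolve_right h, h⟩⟩))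
  rw [h1, h2, e1, e2]

theorem rl_loops_left (p : PP k l) :
    rlP (swapP p) p = Nat.card {c : Quotient p // ¬ ∃ a : Fin k, Quotient.mk p (Sum.inl a) = c} := by
  classical
  let B := {b : Fin l // ¬ ∃ a : Fin k, p.r (Sum.inl a) (Sum.inr b)}
  let SB : Setoid B := ⟨fun x y => p.r (Sum.inr x.1) (Sum.inr y.1),
     ⟨fun _ => p.iseqv.refl _, fun h => p.iseqv.symm h, fun h1 h2 => p.iseqv.trans h1 h2⟩⟩
  have h1 : Nat.card {c : Quotient p // ¬ ∃ a : Fin k, Quotient.mk p (Sum.inl a) = c}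
      = Nat.card (Quotient SB) := by
    apply card_eq_of_quot SB
      (g := fun x => (⟨Quotient.mk p (Sum.inr x.1),
        fun ⟨a, ha⟩ => x.2 ⟨a, Quotient.exact ha⟩⟩ :
        {c : Quotient p // ¬ ∃ a : Fin k, Quotient.mk p (Sum.inl a) = c}))
    · intro x y h
      exact Subtype.ext (Quotient.sound h)
    · intro x y h
      have h' := congrArg Subtype.val h
      simp only at h'
      have h2 : p.r (Sum.inr x.1) (Sum.inr y.1) := Quotient.exact h'
      exact h2
    · rintro ⟨c, hc⟩
      obtain ⟨x, rfl⟩ := Quot.exists_rep c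
      rcases x with a | b
      · exact absurd ⟨a, rfl⟩ hc
      · exact ⟨⟨b, fun ⟨a, ha⟩ => hc ⟨a, Quotient.sound ha⟩⟩, Subtype.ext rfl⟩
  have h2 : rlP (swapP p) p = Nat.card (Quotient SB) := by
    apply card_eq_of_quot SB
      (g := fun x => (⟨Quotient.mk (bigS p (swapP p)) (Sum.inr (Sum.inl x.1)), by
        intro y hy
        have hr := Quotient.exact hy
        rcases y with a | (b' | a)
        · obtain ⟨j0, hj, hm⟩ := (bigS_inl_mid (v := p) (w := swapP p)).mp hr
          exact absurd ⟨a, p.iseqv.trans hj (Mstar.mp hm)⟩ x.2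
        · exact ⟨b', rfl⟩
        · obtain ⟨j0, hj, hm⟩ := (bigS_bot_mid (v := p) (w := swapP p)).mp hr
          exact absurd ⟨a, p.iseqv.trans (p.iseqv.symm hj) (Mstar.mp hm)⟩ x.2⟩ :
        {c : Quotient (bigS p (swapP p)) //
          ∀ y, Quotient.mk (bigS p (swapP p)) y = c → ∃ b : Fin l, y = Sum.inr (Sum.inl b)}))
    · intro x y h
      exact Subtype.ext (Quotient.sound ((bigS_mid_mid (v := p) (w := swapP p)).mpr (Mstar.mpr h)))
    · intro x y h
      have h' := congrArg Subtype.val h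
      simp only at h'
      exact Mstar.mp ((bigS_mid_mid (v := p) (w := swapP p)).mp (Quotient.exact h'))
    · rintro ⟨c, hc⟩
      obtain ⟨y, rfl⟩ := Quot.exists_rep c
      obtain ⟨b, rfl⟩ := hc y rfl
      have hb : ¬ ∃ a : Fin k, p.r (Sum.inl a) (Sum.inr b) := by
        rintro ⟨a, ha⟩
        have hmk : Quotient.mk (bigS p (swapP p)) (Sum.inl a)
            = Quotient.mk (bigS p (swapP p)) (Sum.inr (Sum.inl b)) :=
          Quotient.sound ((bigS_inl_mid (v := p) (w := swapP p)).mpr ⟨b, ha, MrelX.refl _⟩)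
        obtain ⟨b', hb'⟩ := hc _ hmk
        cases hb'
      exact ⟨⟨b, hb⟩, Subtype.ext rfl⟩
  rw [h1, h2]

lemma Mstar' {p : PP k l} {j j' : Fin k} :
    MrelX (swapP p) p j j' ↔ p.r (Sum.inl j) (Sum.inl j') :=
  MrelX_iff (R := fun j j' => p.r (Sum.inl j) (Sum.inl j'))
    ⟨fun _ => p.iseqv.refl _, fun h => p.iseqv.symm h, fun h1 h2 => p.iseqv.trans h1 h2⟩
    (fun _ _ h => h) (fun _ _ h => h) (fun _ _ h => MrelX.of_right h)

theorem rl_loops_right (p : PP k l) :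
    rlP p (swapP p) = Nat.card {c : Quotient p // ¬ ∃ b : Fin l, Quotient.mk p (Sum.inr b) = c} := by
  classical
  let B := {a : Fin k // ¬ ∃ b : Fin l, p.r (Sum.inl a) (Sum.inr b)}
  let SB : Setoid B := ⟨fun x y => p.r (Sum.inl x.1) (Sum.inl y.1),
     ⟨fun _ => p.iseqv.refl _, fun h => p.iseqv.symm h, fun h1 h2 => p.iseqv.trans h1 h2⟩⟩
  have h1 : Nat.card {c : Quotient p // ¬ ∃ b : Fin l, Quotient.mk p (Sum.inr b) = c}
      = Nat.card (Quotient SB) := by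
    apply card_eq_of_quot SB
      (g := fun x => (⟨Quotient.mk p (Sum.inl x.1),
        fun ⟨b, hb⟩ => x.2 ⟨b, p.iseqv.symm (Quotient.exact hb)⟩⟩ :
        {c : Quotient p // ¬ ∃ b : Fin l, Quotient.mk p (Sum.inr b) = c}))
    · intro x y h
      exact Subtype.ext (Quotient.sound h)
    · intro x y h
      have h' := congrArg Subtype.val h
      simp only at h'
      have h2 : p.r (Sum.inl x.1) (Sum.inl y.1) := Quotient.exact h'
      exact h2
    · rintro ⟨c, hc⟩
      obtain ⟨x, rfl⟩ := Quot.exists_rep c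
      rcases x with a | b
      · exact ⟨⟨a, fun ⟨b, hb⟩ => hc ⟨b, Quotient.sound (p.iseqv.symm hb)⟩⟩, Subtype.ext rfl⟩
      · exact absurd ⟨b, rfl⟩ hc
  have h2 : rlP p (swapP p) = Nat.card (Quotient SB) := by
    apply card_eq_of_quot SB
      (g := fun x => (⟨Quotient.mk (bigS (swapP p) p) (Sum.inr (Sum.inl x.1)), by
        intro y hy
        have hr := Quotient.exact hy
        rcases y with b | (a' | b)
        · obtain ⟨j0, hj, hm⟩ := (bigS_inl_mid (v := swapP p) (w := p)).mp hr
          exact absurd ⟨b, p.iseqv.trans (p.iseqv.symm (Mstar'.mp hm))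
            (p.iseqv.symm (show p.r (Sum.inr b) (Sum.inl j0) from hj))⟩ x.2
        · exact ⟨a', rfl⟩
        · obtain ⟨j0, hj, hm⟩ := (bigS_bot_mid (v := swapP p) (w := p)).mp hr
          exact absurd ⟨b, p.iseqv.trans (p.iseqv.symm (Mstar'.mp hm)) hj⟩ x.2⟩ :
        {c : Quotient (bigS (swapP p) p) //
          ∀ y, Quotient.mk (bigS (swapP p) p) y = c → ∃ a : Fin k, y = Sum.inr (Sum.inl a)}))
    · intro x y h
      exact Subtype.ext (Quotient.sound
        ((bigS_mid_mid (v := swapP p) (w := p)).mpr (Mstar'.mpr h)))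
    · intro x y h
      have h' := congrArg Subtype.val h
      simp only at h'
      exact Mstar'.mp ((bigS_mid_mid (v := swapP p) (w := p)).mp (Quotient.exact h'))
    · rintro ⟨c, hc⟩
      obtain ⟨y, rfl⟩ := Quot.exists_rep c
      obtain ⟨a, rfl⟩ := hc y rfl
      have ha : ¬ ∃ b : Fin l, p.r (Sum.inl a) (Sum.inr b) := by
        rintro ⟨b, hb⟩
        have hmk : Quotient.mk (bigS (swapP p) p) (Sum.inr (Sum.inr b))
            = Quotient.mk (bigS (swapP p) p) (Sum.inr (Sum.inl a)) :=
          Quotient.sound ((bigS_bot_mid (v := swapP p) (w := p)).mpr ⟨a, hb, MrelX.refl _⟩)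
        obtain ⟨a', ha'⟩ := hc _ hmk
        cases ha'
      exact ⟨⟨a, ha⟩, Subtype.ext rfl⟩
  rw [h1, h2]

theorem betaP_eq (p : PP k l) : betaP p = rlP (swapP p) p + rlP p (swapP p) := by
  have h := bP_split p
  rw [rl_loops_left, rl_loops_right]
  unfold betaP
  omega

end Counting


section Dec

open Sum

lemma through_exists_lower {t : ℕ} {r : PP t t} (hr : isThrough r) (j : Fin t) :
    ∃ m, r.r (Sum.inl j) (Sum.inr m) := by
  by_contra h
  push_neg at h
  obtain ⟨x, y, hxy, -⟩ := Nat.card_eq_two_iff.mp (hr.1 (Sum.inl j))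
  apply hxy
  have key : ∀ z : {y // r.r (Sum.inl j) y}, z.1 = Sum.inl j := by
    rintro ⟨z, hz⟩
    rcases z with b | m
    · exact congrArg Sum.inl (hr.2.1 j b hz).symm
    · exact absurd hz (h m)
  exact Subtype.ext ((key x).trans (key y).symm)

lemma through_exists_upper {t : ℕ} {r : PP t t} (hr : isThrough r) (m : Fin t) :
    ∃ j, r.r (Sum.inl j) (Sum.inr m) := by
  by_contra h
  push_neg at h
  obtain ⟨x, y, hxy, -⟩ := Nat.card_eq_two_iff.mp (hr.1 (Sum.inr m))
  apply hxy
  have key : ∀ z : {y // r.r (Sum.inr m) y}, z.1 = Sum.inr m := by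
    rintro ⟨z, hz⟩
    rcases z with a | m'
    · exact absurd (r.iseqv.symm hz) (h a)
    · exact congrArg Sum.inr (hr.2.2 m m' hz).symm
  exact Subtype.ext ((key x).trans (key y).symm)

variable {k l t : ℕ} {q : PP l t} {r : PP t t} {s : PP k t}

lemma MrelRS (hs : isBuilding s) (hr : isThrough r) {j j' : Fin t} :
    MrelX s r j j' ↔ j = j' :=
  MrelX_iff (R := fun j j' : Fin t => j = j') eq_equivalence
    (fun _ _ h => hs.1 _ _ h) (fun _ _ h => hr.2.1 _ _ h)
    (fun j _ h => h ▸ MrelX.refl j)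

lemma RS_ul (hs : isBuilding s) (hr : isThrough r) {a a' : Fin k} :
    (compP r s).r (Sum.inl a) (Sum.inl a') ↔ s.r (Sum.inl a) (Sum.inl a') := by
  rw [compP_inl_inl]
  constructor
  · rintro (h | ⟨j, j', h1, h2, h3⟩)
    · exact h
    · cases (MrelRS hs hr).mp h2
      exact s.iseqv.trans h1 (s.iseqv.symm h3)
  · exact Or.inl

lemma RS_ub (hs : isBuilding s) (hr : isThrough r) {a : Fin k} {m : Fin t} :
    (compP r s).r (Sum.inl a) (Sum.inr m) ↔
      ∃ j, s.r (Sum.inl a) (Sum.inr j) ∧ r.r (Sum.inl j) (Sum.inr m) := by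
  rw [compP_inl_inr]
  constructor
  · rintro ⟨j, j', h1, h2, h3⟩
    cases (MrelRS hs hr).mp h2
    exact ⟨j, h1, h3⟩
  · rintro ⟨j, h1, h2⟩
    exact ⟨j, j, h1, MrelX.refl _, h2⟩

lemma RS_bb (hs : isBuilding s) (hr : isThrough r) {m m' : Fin t} :
    (compP r s).r (Sum.inr m) (Sum.inr m') ↔ m = m' := by
  rw [compP_inr_inr]
  constructor
  · rintro (h | ⟨j, j', h1, h2, h3⟩)
    · exact hr.2.2 _ _ h
    · cases (MrelRS hs hr).mp h2
      exact hr.2.2 _ _ (r.iseqv.trans (r.iseqv.symm h1) h3)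
  · rintro rfl
    exact Or.inl (r.iseqv.refl _)

lemma MrelP (hq : isBuilding q) (hr : isThrough r) (hs : isBuilding s) {m m' : Fin t} :
    MrelX (compP r s) (swapP q) m m' ↔ m = m' :=
  MrelX_iff (R := fun m m' : Fin t => m = m') eq_equivalence
    (fun _ _ h => (RS_bb hs hr).mp h)
    (fun _ _ h => hq.1 _ _ h)
    (fun m _ h => h ▸ MrelX.refl m)

lemma dec_ul (hq : isBuilding q) (hr : isThrough r) (hs : isBuilding s) {a a' : Fin k} :
    (compP (swapP q) (compP r s)).r (Sum.inl a) (Sum.inl a') ↔ s.r (Sum.inl a) (Sum.inl a') := by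
  rw [compP_inl_inl]
  constructor
  · rintro (h | ⟨m, m', h1, h2, h3⟩)
    · exact (RS_ul hs hr).mp h
    · cases (MrelP hq hr hs).mp h2
      obtain ⟨j, hj1, hj2⟩ := (RS_ub hs hr).mp h1
      obtain ⟨j', hj1', hj2'⟩ := (RS_ub hs hr).mp h3
      cases hr.2.1 _ _ (r.iseqv.trans hj2 (r.iseqv.symm hj2'))
      exact s.iseqv.trans hj1 (s.iseqv.symm hj1')
  · intro h
    exact Or.inl ((RS_ul hs hr).mpr h)

lemma dec_ub (hq : isBuilding q) (hr : isThrough r) (hs : isBuilding s) {a : Fin k} {b : Fin l} :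
    (compP (swapP q) (compP r s)).r (Sum.inl a) (Sum.inr b) ↔
      ∃ j m, s.r (Sum.inl a) (Sum.inr j) ∧ r.r (Sum.inl j) (Sum.inr m) ∧
        q.r (Sum.inl b) (Sum.inr m) := by
  rw [compP_inl_inr]
  constructor
  · rintro ⟨m, m', h1, h2, h3⟩
    cases (MrelP hq hr hs).mp h2
    obtain ⟨j, hj1, hj2⟩ := (RS_ub hs hr).mp h1
    exact ⟨j, m, hj1, hj2, q.iseqv.symm h3⟩
  · rintro ⟨j, m, h1, h2, h3⟩
    exact ⟨m, m, (RS_ub hs hr).mpr ⟨j, h1, h2⟩, MrelX.refl _, q.iseqv.symm h3⟩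

lemma dec_bb (hq : isBuilding q) (hr : isThrough r) (hs : isBuilding s) {b b' : Fin l} :
    (compP (swapP q) (compP r s)).r (Sum.inr b) (Sum.inr b') ↔ q.r (Sum.inl b) (Sum.inl b') := by
  rw [compP_inr_inr]
  constructor
  · rintro (h | ⟨m, m', h1, h2, h3⟩)
    · exact h
    · cases (MrelP hq hr hs).mp h2
      exact q.iseqv.trans (q.iseqv.symm h1) h3
  · exact fun h => Or.inl h

end Dec

/-- for a partition `p` with through-block decomposition `p = q* r s`:
`p*p = s*s`, `pp* = q*q`, both are projective with `t = t(p)`, `pp*p = p` and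
`β(p) = rl(p*,p) + rl(p,p*)`. -/
theorem through_block_decomposition_properties {k l : ℕ} (p : PP k l)
    (q : PP l (tP p)) (r : PP (tP p) (tP p)) (s : PP k (tP p))
    (hq : isBuilding q) (hr : isThrough r) (hs : isBuilding s)
    (hdec : p = compP (swapP q) (compP r s)) :
    compP (swapP p) p = compP (swapP s) s ∧
    compP p (swapP p) = compP (swapP q) q ∧
    isProjective (compP (swapP p) p) ∧ isProjective (compP p (swapP p)) ∧
    tP (compP (swapP p) p) = tP p ∧ tP (compP p (swapP p)) = tP p ∧
    compP p (compP (swapP p) p) = p ∧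
    betaP p = rlP (swapP p) p + rlP p (swapP p) := by
  have hdec' : ∀ x y, p.r x y ↔ (compP (swapP q) (compP r s)).r x y := fun x y => by rw [← hdec]
  have pul : ∀ a a', p.r (Sum.inl a) (Sum.inl a') ↔ s.r (Sum.inl a) (Sum.inl a') :=
    fun a a' => (hdec' _ _).trans (dec_ul hq hr hs)
  have pub : ∀ a b, p.r (Sum.inl a) (Sum.inr b) ↔
      ∃ j m, s.r (Sum.inl a) (Sum.inr j) ∧ r.r (Sum.inl j) (Sum.inr m) ∧
        q.r (Sum.inl b) (Sum.inr m) :=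
    fun a b => (hdec' _ _).trans (dec_ub hq hr hs)
  have pbb : ∀ b b', p.r (Sum.inr b) (Sum.inr b') ↔ q.r (Sum.inl b) (Sum.inl b') :=
    fun b b' => (hdec' _ _).trans (dec_bb hq hr hs)
  have crossS : ∀ a a', (∃ b, p.r (Sum.inl a) (Sum.inr b) ∧ p.r (Sum.inl a') (Sum.inr b)) ↔
      (∃ j, s.r (Sum.inl a) (Sum.inr j) ∧ s.r (Sum.inl a') (Sum.inr j)) := by
    intro a a'
    constructor
    · rintro ⟨b, h1, h2⟩
      obtain ⟨j, m, hs1, hr1, hq1⟩ := (pub _ _).mp h1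
      obtain ⟨j', m', hs2, hr2, hq2⟩ := (pub _ _).mp h2
      cases hq.1 _ _ (q.iseqv.trans (q.iseqv.symm hq1) hq2)
      cases hr.2.1 _ _ (r.iseqv.trans hr1 (r.iseqv.symm hr2))
      exact ⟨j, hs1, hs2⟩
    · rintro ⟨j, h1, h2⟩
      obtain ⟨m, hm⟩ := through_exists_lower hr j
      obtain ⟨b, hb⟩ := hq.2.1 m
      exact ⟨b, (pub _ _).mpr ⟨j, m, h1, hm, hb⟩, (pub _ _).mpr ⟨j, m, h2, hm, hb⟩⟩
  have crossQ : ∀ b b', (∃ a, p.r (Sum.inl a) (Sum.inr b) ∧ p.r (Sum.inl a) (Sum.inr b')) ↔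
      (∃ m, q.r (Sum.inl b) (Sum.inr m) ∧ q.r (Sum.inl b') (Sum.inr m)) := by
    intro b b'
    constructor
    · rintro ⟨a, h1, h2⟩
      obtain ⟨j, m, hs1, hr1, hq1⟩ := (pub _ _).mp h1
      obtain ⟨j', m', hs2, hr2, hq2⟩ := (pub _ _).mp h2
      cases hs.1 _ _ (s.iseqv.trans (s.iseqv.symm hs1) hs2)
      cases hr.2.2 _ _ (r.iseqv.trans (r.iseqv.symm hr1) hr2)
      exact ⟨m, hq1, hq2⟩
    · rintro ⟨m, h1, h2⟩
      obtain ⟨j, hj⟩ := through_exists_upper hr m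
      obtain ⟨a, ha⟩ := hs.2.1 j
      exact ⟨a, (pub _ _).mpr ⟨j, m, ha, hj, h1⟩, (pub _ _).mpr ⟨j, m, ha, hj, h2⟩⟩
  have e2 : compP p (swapP p) = compP (swapP (swapP p)) (swapP p) := by rw [swapP_swapP]
  have G1 : compP (swapP p) p = compP (swapP s) s := by
    apply Setoid.ext; intro x y
    rw [star_r p, star_r s]
    rcases x with a | a <;> rcases y with a' | a'
    · exact pul a a'
    · exact crossS a a'
    · exact crossS a a'
    · exact pul a a'
  have G2 : compP p (swapP p) = compP (swapP q) q := by
    rw [e2]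
    apply Setoid.ext; intro x y
    rw [star_r (swapP p), star_r q]
    rcases x with b | b <;> rcases y with b' | b'
    · exact pbb b b'
    · constructor
      · rintro ⟨a, h1, h2⟩
        exact (crossQ b b').mp ⟨a, p.iseqv.symm h1, p.iseqv.symm h2⟩
      · intro h
        obtain ⟨a, h1, h2⟩ := (crossQ b b').mpr h
        exact ⟨a, p.iseqv.symm h1, p.iseqv.symm h2⟩
    · constructor
      · rintro ⟨a, h1, h2⟩
        exact (crossQ b b').mp ⟨a, p.iseqv.symm h1, p.iseqv.symm h2⟩
      · intro h
        obtain ⟨a, h1, h2⟩ := (crossQ b b').mpr h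
        exact ⟨a, p.iseqv.symm h1, p.iseqv.symm h2⟩
    · exact pbb b b'
  have G6 : tP (compP p (swapP p)) = tP p := by
    rw [e2, tP_star (swapP p), tP_swap p]
  exact ⟨G1, G2, star_projective p, e2 ▸ star_projective (swapP p), tP_star p, G6,
    comp_star_self p, betaP_eq p⟩
end

section
/- A partition p ∈ P(k,k) is projective (i.e., p* = p and pp = p) if and only if there exists a partition q ∈ P(k,l) for some l such that p = q*q. -/
namespace ProjAux

open Sum Relation

variable {k l m : ℕ}

/-- Closed form for the relation generated in the composition procedure. -/
def compRel (p : PP k l) (q : PP l m) :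
    (Fin k ⊕ (Fin l ⊕ Fin m)) → (Fin k ⊕ (Fin l ⊕ Fin m)) → Prop
  | .inl a, .inl a' => p.r (.inl a) (.inl a')
  | .inl a, .inr (.inl b) => p.r (.inl a) (.inr b)
  | .inl a, .inr (.inr c) => ∃ b, p.r (.inl a) (.inr b) ∧ q.r (.inl b) (.inr c)
  | .inr (.inl b), .inl a => p.r (.inl a) (.inr b)
  | .inr (.inl b), .inr (.inl b') => p.r (.inr b) (.inr b')
  | .inr (.inl b), .inr (.inr c) => q.r (.inl b) (.inr c)
  | .inr (.inr c), .inl a => ∃ b, p.r (.inl a) (.inr b) ∧ q.r (.inl b) (.inr c)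
  | .inr (.inr c), .inr (.inl b) => q.r (.inl b) (.inr c)
  | .inr (.inr c), .inr (.inr c') => q.r (.inr c) (.inr c')

variable {p : PP k l} {q : PP l m}

lemma compRel_refl (x) : compRel p q x x := by
  rcases x with a | b | c
  · exact p.iseqv.refl _
  · exact p.iseqv.refl _
  · exact q.iseqv.refl _

lemma compRel_symm {x y} (hxy : compRel p q x y) : compRel p q y x := by
  rcases x with a | b | c <;> rcases y with a' | b' | c' <;>
    simp only [compRel] at hxy ⊢
  · exact p.iseqv.symm hxy
  · exact hxy
  · exact hxy
  · exact hxy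
  · exact p.iseqv.symm hxy
  · exact hxy
  · exact hxy
  · exact hxy
  · exact q.iseqv.symm hxy

variable (h : ∀ b b' : Fin l, p.r (.inr b) (.inr b') ↔ q.r (.inl b) (.inl b'))

include h

lemma compRel_trans {x y z} (h1 : compRel p q x y) (h2 : compRel p q y z) :
    compRel p q x z := by
  rcases x with a | b | c <;> rcases y with a' | b' | c' <;> rcases z with a'' | b'' | c'' <;>
    simp only [compRel] at h1 h2 ⊢
  · exact p.iseqv.trans h1 h2
  · exact p.iseqv.trans h1 h2
  · obtain ⟨b, hb, hq⟩ := h2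
    exact ⟨b, p.iseqv.trans h1 hb, hq⟩
  · exact p.iseqv.trans h1 (p.iseqv.symm h2)
  · exact p.iseqv.trans h1 h2
  · exact ⟨b', h1, h2⟩
  · obtain ⟨b, hpb, hqb⟩ := h1
    obtain ⟨b', hpb', hqb'⟩ := h2
    have hq1 : q.r (.inl b) (.inl b') := q.iseqv.trans hqb (q.iseqv.symm hqb')
    exact p.iseqv.trans hpb (p.iseqv.trans ((h b b').mpr hq1) (p.iseqv.symm hpb'))
  · obtain ⟨b, hpb, hqb⟩ := h1
    have hq1 : q.r (.inl b) (.inl b'') := q.iseqv.trans hqb (q.iseqv.symm h2)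
    exact p.iseqv.trans hpb ((h b b'').mpr hq1)
  · obtain ⟨b, hpb, hqb⟩ := h1
    exact ⟨b, hpb, q.iseqv.trans hqb h2⟩
  · exact p.iseqv.trans (p.iseqv.symm h2) h1
  · exact p.iseqv.trans (p.iseqv.symm h1) h2
  · obtain ⟨b', hpb', hqb'⟩ := h2
    exact q.iseqv.trans ((h b b').mp (p.iseqv.trans (p.iseqv.symm h1) hpb')) hqb'
  · exact p.iseqv.trans h2 (p.iseqv.symm h1)
  · exact p.iseqv.trans h1 h2
  · exact q.iseqv.trans ((h b b').mp h1) h2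
  · obtain ⟨b', hpb', hqb'⟩ := h2
    exact p.iseqv.trans hpb' ((h b' b).mpr (q.iseqv.trans hqb' (q.iseqv.symm h1)))
  · exact (h b b'').mpr (q.iseqv.trans h1 (q.iseqv.symm h2))
  · exact q.iseqv.trans h1 h2
  · obtain ⟨b, hpb, hqb⟩ := h1
    exact ⟨b, p.iseqv.trans (p.iseqv.symm h2) hpb, hqb⟩
  · obtain ⟨b, hpb, hqb⟩ := h1
    exact q.iseqv.trans ((h b'' b).mp (p.iseqv.trans (p.iseqv.symm h2) hpb)) hqb
  · obtain ⟨b, hpb, hqb⟩ := h1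
    obtain ⟨b', hpb', hqb'⟩ := h2
    exact q.iseqv.trans (q.iseqv.symm hqb)
      (q.iseqv.trans ((h b b').mp (p.iseqv.trans (p.iseqv.symm hpb) hpb')) hqb')
  · exact ⟨b', h2, h1⟩
  · exact q.iseqv.trans ((h b'' b').mp (p.iseqv.symm h2)) h1
  · exact q.iseqv.trans (q.iseqv.symm h1) h2
  · obtain ⟨b, hpb, hqb⟩ := h2
    exact ⟨b, hpb, q.iseqv.trans hqb (q.iseqv.symm h1)⟩
  · exact q.iseqv.trans h2 (q.iseqv.symm h1)
  · exact q.iseqv.trans h1 h2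

lemma midRel_sub {x y} (hxy : midRel p q x y) : compRel p q x y := by
  rcases hxy with ⟨a, b, hab, rfl, rfl⟩ | ⟨a, b, hab, rfl, rfl⟩
  · rcases a with a | b' <;> rcases b with a' | b''
    · exact hab
    · exact hab
    · exact p.iseqv.symm hab
    · exact hab
  · rcases a with b' | c <;> rcases b with b'' | c'
    · exact (h b' b'').mpr hab
    · exact hab
    · exact q.iseqv.symm hab
    · exact hab

lemma eqvGen_iff {x y} : Relation.EqvGen (midRel p q) x y ↔ compRel p q x y := by
  constructor
  · intro hxy
    induction hxy with
    | rel a b hab => exact midRel_sub h hab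
    | refl a => exact compRel_refl a
    | symm a b _ ih => exact compRel_symm ih
    | trans a b c _ _ ih1 ih2 => exact compRel_trans h ih1 ih2
  · intro hxy
    have top_mid : ∀ (a : Fin k) (b : Fin l), p.r (.inl a) (.inr b) →
        Relation.EqvGen (midRel p q) (.inl a) (.inr (.inl b)) := fun a b hab =>
      Relation.EqvGen.rel _ _ (Or.inl ⟨.inl a, .inr b, hab, rfl, rfl⟩)
    have mid_bot : ∀ (b : Fin l) (c : Fin m), q.r (.inl b) (.inr c) →
        Relation.EqvGen (midRel p q) (.inr (.inl b)) (.inr (.inr c)) := fun b c hbc =>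
      Relation.EqvGen.rel _ _ (Or.inr ⟨.inl b, .inr c, hbc, rfl, rfl⟩)
    rcases x with a | b | c <;> rcases y with a' | b' | c' <;>
      simp only [compRel] at hxy
    · exact Relation.EqvGen.rel _ _ (Or.inl ⟨.inl a, .inl a', hxy, rfl, rfl⟩)
    · exact top_mid _ _ hxy
    · obtain ⟨b, hpb, hqb⟩ := hxy
      exact Relation.EqvGen.trans _ _ _ (top_mid _ _ hpb) (mid_bot _ _ hqb)
    · exact Relation.EqvGen.symm _ _ (top_mid _ _ hxy)
    · exact Relation.EqvGen.rel _ _ (Or.inl ⟨.inr b, .inr b', hxy, rfl, rfl⟩)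
    · exact mid_bot _ _ hxy
    · obtain ⟨b, hpb, hqb⟩ := hxy
      exact Relation.EqvGen.symm _ _
        (Relation.EqvGen.trans _ _ _ (top_mid _ _ hpb) (mid_bot _ _ hqb))
    · exact Relation.EqvGen.symm _ _ (mid_bot _ _ hxy)
    · exact Relation.EqvGen.rel _ _ (Or.inr ⟨.inr c, .inr c', hxy, rfl, rfl⟩)

lemma compP_r {x y} :
    (compP q p).r x y ↔ compRel p q (Sum.map id Sum.inr x) (Sum.map id Sum.inr y) :=
  eqvGen_iff h

lemma compP_TT (a a' : Fin k) :
    (compP q p).r (.inl a) (.inl a') ↔ p.r (.inl a) (.inl a') := compP_r h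

lemma compP_TB (a : Fin k) (c : Fin m) :
    (compP q p).r (.inl a) (.inr c) ↔
      ∃ b, p.r (.inl a) (.inr b) ∧ q.r (.inl b) (.inr c) := compP_r h

lemma compP_BT (c : Fin m) (a : Fin k) :
    (compP q p).r (.inr c) (.inl a) ↔
      ∃ b, p.r (.inl a) (.inr b) ∧ q.r (.inl b) (.inr c) := compP_r h

lemma compP_BB (c c' : Fin m) :
    (compP q p).r (.inr c) (.inr c') ↔ q.r (.inr c) (.inr c') := compP_r h

end ProjAux

/-- `p ∈ P(k,k)` is projective iff `p = q*q` for some `q ∈ P(k,l)`. -/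
theorem projective_iff_exists_swap_comp {k : ℕ} (p : PP k k) :
    isProjective p ↔ ∃ (l : ℕ) (q : PP k l), p = compP (swapP q) q := by
  constructor
  · rintro ⟨hs, hi⟩
    exact ⟨k, p, by rw [hs, hi]⟩
  · rintro ⟨l, q, rfl⟩
    set P := compP (swapP q) q with hP
    have h0 : ∀ b b' : Fin l, q.r (.inr b) (.inr b') ↔ (swapP q).r (.inl b) (.inl b') :=
      fun _ _ => Iff.rfl
    have hTT : ∀ a a' : Fin k, P.r (.inl a) (.inl a') ↔ q.r (.inl a) (.inl a') :=
      fun a a' => ProjAux.compP_TT h0 a a'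
    have hBB : ∀ c c' : Fin k, P.r (.inr c) (.inr c') ↔ q.r (.inl c) (.inl c') :=
      fun c c' => ProjAux.compP_BB h0 c c'
    have hTB : ∀ a c : Fin k, P.r (.inl a) (.inr c) ↔
        ∃ b, q.r (.inl a) (.inr b) ∧ q.r (.inl c) (.inr b) := by
      intro a c
      rw [ProjAux.compP_TB h0]
      refine exists_congr fun b => and_congr_right fun _ => ?_
      constructor
      · intro hb
        exact q.iseqv.symm hb
      · intro hb
        exact q.iseqv.symm hb
    have hsym : swapP P = P := by
      apply Setoid.ext
      rintro (a | c) (a' | c')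
      · show P.r (.inr a) (.inr a') ↔ P.r (.inl a) (.inl a')
        rw [hBB a a', hTT a a']
      · show P.r (.inr a) (.inl c') ↔ P.r (.inl a) (.inr c')
        constructor
        · intro hh
          obtain ⟨b, h1, h2⟩ := (hTB c' a).mp (P.iseqv.symm hh)
          exact (hTB a c').mpr ⟨b, h2, h1⟩
        · intro hh
          obtain ⟨b, h1, h2⟩ := (hTB a c').mp hh
          exact P.iseqv.symm ((hTB c' a).mpr ⟨b, h2, h1⟩)
      · show P.r (.inl c) (.inr a') ↔ P.r (.inr c) (.inl a')
        constructor
        · intro hh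
          obtain ⟨b, h1, h2⟩ := (hTB c a').mp hh
          exact P.iseqv.symm ((hTB a' c).mpr ⟨b, h2, h1⟩)
        · intro hh
          obtain ⟨b, h1, h2⟩ := (hTB a' c).mp (P.iseqv.symm hh)
          exact (hTB c a').mpr ⟨b, h2, h1⟩
      · show P.r (.inl c) (.inl c') ↔ P.r (.inr c) (.inr c')
        rw [hTT c c', hBB c c']
    have hmid2 : ∀ c c' : Fin k, P.r (.inr c) (.inr c') ↔ P.r (.inl c) (.inl c') :=
      fun c c' => by rw [hBB c c', hTT c c']
    have hidem : compP P P = P := by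
      apply Setoid.ext
      rintro (a | c) (a' | c')
      · exact ProjAux.compP_TT hmid2 a a'
      · rw [show ((compP P P).r (Sum.inl a) (Sum.inr c')) =
            ((compP P P).r (Sum.inl a) (Sum.inr c')) from rfl, ProjAux.compP_TB hmid2]
        constructor
        · rintro ⟨m, h1, h2⟩
          obtain ⟨b, hb1, hb2⟩ := (hTB a m).mp h1
          obtain ⟨b', hb3, hb4⟩ := (hTB m c').mp h2
          exact (hTB a c').mpr
            ⟨b, hb1, q.iseqv.trans hb4 (q.iseqv.trans (q.iseqv.symm hb3) hb2)⟩
        · intro hh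
          refine ⟨c', hh, ?_⟩
          obtain ⟨b, h1, h2⟩ := (hTB a c').mp hh
          exact (hTB c' c').mpr ⟨b, h2, h2⟩
      · rw [show ((compP P P).r (Sum.inr c) (Sum.inl a')) =
            ((compP P P).r (Sum.inr c) (Sum.inl a')) from rfl, ProjAux.compP_BT hmid2]
        constructor
        · rintro ⟨m, h1, h2⟩
          obtain ⟨b, hb1, hb2⟩ := (hTB a' m).mp h1
          obtain ⟨b', hb3, hb4⟩ := (hTB m c).mp h2
          exact P.iseqv.symm ((hTB a' c).mpr
            ⟨b, hb1, q.iseqv.trans hb4 (q.iseqv.trans (q.iseqv.symm hb3) hb2)⟩)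
        · intro hh
          have hh' := P.iseqv.symm hh
          refine ⟨c, hh', ?_⟩
          obtain ⟨b, h1, h2⟩ := (hTB a' c).mp hh'
          exact (hTB c c).mpr ⟨b, h2, h2⟩
      · exact ProjAux.compP_BB hmid2 c c'
    exact ⟨hsym, hidem⟩
end

section
/- A noncrossing partition p ∈ NC(k,k) is projective if and only if it is symmetric (p* = p). -/
section Aux

variable {k : ℕ} {p : PP k k}

/-- Symmetry of `p` as a statement about the relation. -/
lemma swap_rel_of_symm (hsym : swapP p = p) {x y : Fin k ⊕ Fin k} (h : p.r x y) :
    p.r (Sum.swap x) (Sum.swap y) := by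
  have h1 : (swapP p).r (Sum.swap x) (Sum.swap y) ↔ p.r (Sum.swap x) (Sum.swap y) := by
    rw [hsym]
  have h2 : (swapP p).r (Sum.swap x) (Sum.swap y) = p.r x y := by
    show p.r (Sum.swap (Sum.swap x)) (Sum.swap (Sum.swap y)) = p.r x y
    rw [Sum.swap_swap, Sum.swap_swap]
  exact h1.mp (h2 ▸ h)

/-- Key lemma: in a symmetric noncrossing partition, an upper point belonging to a
through-block is connected to the lower point directly below it. -/
lemma star_lemma (hnc : isNC p) (hsym : swapP p = p) (a b : Fin k)
    (h : p.r (Sum.inl a) (Sum.inr b)) : p.r (Sum.inl a) (Sum.inr a) := by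
  have h2 : p.r (Sum.inl b) (Sum.inr a) := p.iseqv.symm (swap_rel_of_symm hsym h)
  rcases lt_trichotomy a b with hab | hab | hab
  · -- x1 = inl a, x2 = inl b, x3 = inr b, x4 = inr a
    have hk : (b : ℕ) < k := b.isLt
    have hab' : (a : ℕ) < (b : ℕ) := hab
    have key : p.r (Sum.inl a) (Sum.inl b) := by
      by_contra hne
      exact hnc ⟨Sum.inl a, Sum.inl b, Sum.inr b, Sum.inr a,
        by simp only [posP, Sum.elim_inl, Sum.elim_inr]; omega, by simp only [posP, Sum.elim_inl, Sum.elim_inr]; omega, by simp only [posP, Sum.elim_inl, Sum.elim_inr]; omega, h, h2, hne⟩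
    exact p.iseqv.trans key h2
  · subst hab; exact h
  · -- x1 = inl b, x2 = inl a, x3 = inr a, x4 = inr b
    have hk : (a : ℕ) < k := a.isLt
    have hab' : (b : ℕ) < (a : ℕ) := hab
    have key : p.r (Sum.inl b) (Sum.inl a) := by
      by_contra hne
      exact hnc ⟨Sum.inl b, Sum.inl a, Sum.inr a, Sum.inr b,
        by simp only [posP, Sum.elim_inl, Sum.elim_inr]; omega, by simp only [posP, Sum.elim_inl, Sum.elim_inr]; omega, by simp only [posP, Sum.elim_inl, Sum.elim_inr]; omega, h2, h, hne⟩
    exact p.iseqv.trans (p.iseqv.symm key) h2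

lemma star_lemma' (hnc : isNC p) (hsym : swapP p = p) (a b : Fin k)
    (h : p.r (Sum.inl a) (Sum.inr b)) : p.r (Sum.inl b) (Sum.inr b) :=
  star_lemma hnc hsym b a (p.iseqv.symm (swap_rel_of_symm hsym h))

end Aux

/-- a noncrossing partition `p ∈ NC(k,k)` is projective iff it is symmetric. -/
theorem noncrossing_projective_iff_symmetric {k : ℕ} (p : PP k k) (hnc : isNC p) :
    isProjective p ↔ swapP p = p := by
  constructor
  · exact fun h => h.1
  · intro hsym
    refine ⟨hsym, ?_⟩
    have star := star_lemma (p := p) hnc hsym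
    have star' := star_lemma' (p := p) hnc hsym
    apply Setoid.ext
    intro x y
    show Relation.EqvGen (midRel p p)
      (Sum.map id Sum.inr x) (Sum.map id Sum.inr y) ↔ p.r x y
    constructor
    · intro hxy
      set h : Fin k ⊕ (Fin k ⊕ Fin k) → Quotient p :=
        Sum.elim (fun a => Quotient.mk p (Sum.inl a))
          (Sum.elim (fun m => Quotient.mk p (Sum.inr m))
            (fun b => Quotient.mk p (Sum.inr b))) with hh
      have hg : ∀ u v : Fin k ⊕ Fin k, p.r u v →
          p.r (Sum.elim Sum.inr Sum.inr u) (Sum.elim Sum.inr Sum.inr v) := by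
        intro u v huv
        match u, v with
        | Sum.inl m, Sum.inl m' => exact swap_rel_of_symm hsym huv
        | Sum.inl m, Sum.inr b => exact p.iseqv.trans (p.iseqv.symm (star m b huv)) huv
        | Sum.inr b, Sum.inl m => exact p.iseqv.trans huv (star m b (p.iseqv.symm huv))
        | Sum.inr b, Sum.inr b' => exact huv
      have hmid : ∀ u v, midRel p p u v → h u = h v := by
        intro u v huv
        rcases huv with ⟨a, b, hab, hu, hv⟩ | ⟨a, b, hab, hu, hv⟩
        · subst hu; subst hv
          have e1 : ∀ c : Fin k ⊕ Fin k,
              h (Sum.map id Sum.inl c) = Quotient.mk p c := by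
            rintro (c | c) <;> rfl
          rw [e1, e1]; exact Quot.sound hab
        · subst hu; subst hv
          have e2 : ∀ c : Fin k ⊕ Fin k,
              h (Sum.inr c) = Quotient.mk p (Sum.elim Sum.inr Sum.inr c) := by
            rintro (c | c) <;> rfl
          rw [e2, e2]; exact Quot.sound (hg a b hab)
      have hE : ∀ u v, Relation.EqvGen (midRel p p) u v → h u = h v := by
        intro u v huv
        induction huv with
        | rel u v h' => exact hmid u v h'
        | refl => rfl
        | symm _ _ _ ih => exact ih.symm
        | trans _ _ _ _ _ ih1 ih2 => exact ih1.trans ih2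
      have key := hE _ _ hxy
      have ef : ∀ z : Fin k ⊕ Fin k, h (Sum.map id Sum.inr z) = Quotient.mk p z := by
        rintro (z | z) <;> rfl
      rw [ef, ef] at key
      exact Quotient.exact key
    · intro hxy
      match x, y with
      | Sum.inl a, Sum.inl b =>
        exact Relation.EqvGen.rel _ _ (Or.inl ⟨Sum.inl a, Sum.inl b, hxy, rfl, rfl⟩)
      | Sum.inr a, Sum.inr b =>
        exact Relation.EqvGen.rel _ _ (Or.inr ⟨Sum.inr a, Sum.inr b, hxy, rfl, rfl⟩)
      | Sum.inl a, Sum.inr b =>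
        refine Relation.EqvGen.trans _ (Sum.inr (Sum.inl b)) _ ?_ ?_
        · exact Relation.EqvGen.rel _ _ (Or.inl ⟨Sum.inl a, Sum.inr b, hxy, rfl, rfl⟩)
        · exact Relation.EqvGen.rel _ _
            (Or.inr ⟨Sum.inl b, Sum.inr b, star' a b hxy, rfl, rfl⟩)
      | Sum.inr a, Sum.inl b =>
        refine Relation.EqvGen.symm _ _ ?_
        have hba : p.r (Sum.inl b) (Sum.inr a) := p.iseqv.symm hxy
        refine Relation.EqvGen.trans _ (Sum.inr (Sum.inl a)) _ ?_ ?_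
        · exact Relation.EqvGen.rel _ _ (Or.inl ⟨Sum.inl b, Sum.inr a, hba, rfl, rfl⟩)
        · exact Relation.EqvGen.rel _ _
            (Or.inr ⟨Sum.inl a, Sum.inr a, star' b a hba, rfl, rfl⟩)
end

section
/- For any partition p ∈ P(k,l) and any integer N ≥ 1, the rank of the linear map T_p : (ℂ^N)^{⊗k} → (ℂ^N)^{⊗l} equals N^{t(p)}, where t(p) is the number of through-blocks of p. -/
open scoped Classical in
/-- The (unnormalized) linear map `T̊_p` associated to a partition, as a matrix. -/
noncomputable def Tmat0 {k l : ℕ} (N : ℕ) (p : PP k l) :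
    Matrix (Fin l → Fin N) (Fin k → Fin N) ℂ :=
  fun j i => if (∀ x y, p.r x y → Sum.elim i j x = Sum.elim i j y) then 1 else 0

/-- The normalized map `T_p = N^{-β(p)/2} T̊_p`. -/
noncomputable def TmatN {k l : ℕ} (N : ℕ) (p : PP k l) :
    Matrix (Fin l → Fin N) (Fin k → Fin N) ℂ :=
  ((N : ℂ) ^ (-(betaP p : ℂ) / 2)) • Tmat0 N p

open scoped Classical

section Aux

variable {k l : ℕ}

/-- The through-blocks of `p`. -/
abbrev TBlk (p : PP k l) : Type _ :=
  {c : Quotient p // (∃ a : Fin k, Quotient.mk p (Sum.inl a) = c) ∧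
    (∃ b : Fin l, Quotient.mk p (Sum.inr b) = c)}

noncomputable instance (p : PP k l) : Fintype (Quotient p) := Fintype.ofFinite _
noncomputable instance (p : PP k l) : Fintype (TBlk p) := Fintype.ofFinite _

/-- Left factor of `T̊_p`. -/
noncomputable def Lmat (N : ℕ) (p : PP k l) :
    Matrix (Fin l → Fin N) (TBlk p → Fin N) ℂ := fun j c =>
  if ((∀ b b' : Fin l, p.r (Sum.inr b) (Sum.inr b') → j b = j b') ∧
      (∀ b : Fin l, ∀ t : TBlk p, t.1 = Quotient.mk p (Sum.inr b) → j b = c t)) then 1 else 0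

/-- Right factor of `T̊_p`. -/
noncomputable def Rmat (N : ℕ) (p : PP k l) :
    Matrix (TBlk p → Fin N) (Fin k → Fin N) ℂ := fun c i =>
  if ((∀ a a' : Fin k, p.r (Sum.inl a) (Sum.inl a') → i a = i a') ∧
      (∀ a : Fin k, ∀ t : TBlk p, t.1 = Quotient.mk p (Sum.inl a) → i a = c t)) then 1 else 0

lemma Tmat0_eq_mul (N : ℕ) (p : PP k l) : Tmat0 N p = Lmat N p * Rmat N p := by
  funext j i
  rw [Matrix.mul_apply, Tmat0]
  by_cases hδ : ∀ x y, p.r x y → Sum.elim i j x = Sum.elim i j y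
  · rw [if_pos hδ]
    set c0 : TBlk p → Fin N := fun t => i t.2.1.choose with hc0
    have hLc0 : Lmat N p j c0 = 1 := by
      rw [Lmat, if_pos]
      refine ⟨fun b b' hr => hδ _ _ hr, fun b t ht => ?_⟩
      have hs := t.2.1.choose_spec
      have : p.r (Sum.inl t.2.1.choose) (Sum.inr b) := Quotient.exact (hs.trans ht)
      exact (hδ _ _ this).symm
    have hRc0 : Rmat N p c0 i = 1 := by
      rw [Rmat, if_pos]
      refine ⟨fun a a' hr => hδ _ _ hr, fun a t ht => ?_⟩
      have hs := t.2.1.choose_spec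
      have : p.r (Sum.inl t.2.1.choose) (Sum.inl a) := Quotient.exact (hs.trans ht)
      exact (hδ _ _ this).symm
    have huniq : ∀ c, Rmat N p c i ≠ 0 → c = c0 := by
      intro c hc
      rw [Rmat] at hc
      by_cases h : (∀ a a' : Fin k, p.r (Sum.inl a) (Sum.inl a') → i a = i a') ∧
          (∀ a : Fin k, ∀ t : TBlk p, t.1 = Quotient.mk p (Sum.inl a) → i a = c t)
      · funext t
        exact (h.2 t.2.1.choose t t.2.1.choose_spec.symm).symm
      · exact absurd (if_neg h) hc
    rw [Finset.sum_eq_single c0]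
    · rw [hLc0, hRc0, one_mul]
    · intro c _ hc
      have : Rmat N p c i = 0 := by
        by_contra h
        exact hc (huniq c h)
      rw [this, mul_zero]
    · intro h; exact absurd (Finset.mem_univ c0) h
  · rw [if_neg hδ]
    refine (Finset.sum_eq_zero fun c _ => ?_).symm
    by_contra hc
    have hL : Lmat N p j c ≠ 0 := fun h => hc (by rw [h, zero_mul])
    have hR : Rmat N p c i ≠ 0 := fun h => hc (by rw [h, mul_zero])
    rw [Lmat] at hL; rw [Rmat] at hR
    have hLc : (∀ b b' : Fin l, p.r (Sum.inr b) (Sum.inr b') → j b = j b') ∧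
        (∀ b : Fin l, ∀ t : TBlk p, t.1 = Quotient.mk p (Sum.inr b) → j b = c t) := by
      by_contra h; exact hL (if_neg h)
    have hRc : (∀ a a' : Fin k, p.r (Sum.inl a) (Sum.inl a') → i a = i a') ∧
        (∀ a : Fin k, ∀ t : TBlk p, t.1 = Quotient.mk p (Sum.inl a) → i a = c t) := by
      by_contra h; exact hR (if_neg h)
    apply hδ
    have key : ∀ (a : Fin k) (b : Fin l), p.r (Sum.inl a) (Sum.inr b) → i a = j b := by
      intro a b hr
      refine ((hRc.2 a ⟨Quotient.mk p (Sum.inl a), ⟨a, rfl⟩,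
        ⟨b, Quotient.sound (p.symm hr)⟩⟩ rfl).trans
        (hLc.2 b _ (Quotient.sound hr)).symm)
    rintro (a | b) (a' | b') hr
    · exact hRc.1 a a' hr
    · exact key a b' hr
    · exact (key a' b (p.symm hr)).symm
    · exact hLc.1 b b' hr

/-- canonical upper extension of a through-block coloring -/
noncomputable def extU (N : ℕ) (hN : 1 ≤ N) (p : PP k l) (c : TBlk p → Fin N) :
    Fin k → Fin N := fun a =>
  if h : ∃ t : TBlk p, t.1 = Quotient.mk p (Sum.inl a) then c h.choose else ⟨0, hN⟩

/-- canonical lower extension of a through-block coloring -/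
noncomputable def extL (N : ℕ) (hN : 1 ≤ N) (p : PP k l) (c : TBlk p → Fin N) :
    Fin l → Fin N := fun b =>
  if h : ∃ t : TBlk p, t.1 = Quotient.mk p (Sum.inr b) then c h.choose else ⟨0, hN⟩

lemma extU_eq (N : ℕ) (hN : 1 ≤ N) (p : PP k l) (c : TBlk p → Fin N) (a : Fin k) (t : TBlk p)
    (ht : t.1 = Quotient.mk p (Sum.inl a)) : extU N hN p c a = c t := by
  rw [extU, dif_pos ⟨t, ht⟩]
  congr 1
  exact Subtype.ext ((⟨t, ht⟩ : ∃ t : TBlk p, t.1 = Quotient.mk p (Sum.inl a)).choose_spec.trans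
    ht.symm)

lemma extL_eq (N : ℕ) (hN : 1 ≤ N) (p : PP k l) (c : TBlk p → Fin N) (b : Fin l) (t : TBlk p)
    (ht : t.1 = Quotient.mk p (Sum.inr b)) : extL N hN p c b = c t := by
  rw [extL, dif_pos ⟨t, ht⟩]
  congr 1
  exact Subtype.ext ((⟨t, ht⟩ : ∃ t : TBlk p, t.1 = Quotient.mk p (Sum.inr b)).choose_spec.trans
    ht.symm)

lemma Rmat_extU (N : ℕ) (hN : 1 ≤ N) (p : PP k l) (c c' : TBlk p → Fin N) :
    Rmat N p c (extU N hN p c') = if c = c' then 1 else 0 := by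
  rw [Rmat]
  by_cases h : c = c'
  · subst h
    rw [if_pos rfl, if_pos]
    constructor
    · intro a a' hr
      have hq : Quotient.mk p (Sum.inl a) = Quotient.mk p (Sum.inl a') := Quotient.sound hr
      show (if h : ∃ t : TBlk p, t.1 = Quotient.mk p (Sum.inl a) then c h.choose else ⟨0, hN⟩)
        = _
      rw [hq]; rfl
    · intro a t ht
      exact extU_eq N hN p c a t ht
  · rw [if_neg h, if_neg]
    rintro ⟨-, h2⟩
    apply h
    funext t
    obtain ⟨a, ha⟩ := t.2.1
    have h3 := h2 a t ha.symm
    rw [extU_eq N hN p c' a t ha.symm] at h3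
    exact h3.symm

lemma Lmat_extL (N : ℕ) (hN : 1 ≤ N) (p : PP k l) (c c' : TBlk p → Fin N) :
    Lmat N p (extL N hN p c) c' = if c = c' then 1 else 0 := by
  rw [Lmat]
  by_cases h : c = c'
  · subst h
    rw [if_pos rfl, if_pos]
    constructor
    · intro b b' hr
      have hq : Quotient.mk p (Sum.inr b) = Quotient.mk p (Sum.inr b') := Quotient.sound hr
      show (if h : ∃ t : TBlk p, t.1 = Quotient.mk p (Sum.inr b) then c h.choose else ⟨0, hN⟩)
        = _
      rw [hq]; rfl
    · intro b t ht
      exact extL_eq N hN p c b t ht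
  · rw [if_neg h, if_neg]
    rintro ⟨-, h2⟩
    apply h
    funext t
    obtain ⟨b, hb⟩ := t.2.2
    have h3 := h2 b t hb.symm
    rw [extL_eq N hN p c b t hb.symm] at h3
    exact h3

lemma Rmat_surjective (N : ℕ) (hN : 1 ≤ N) (p : PP k l) :
    Function.Surjective (Rmat N p).mulVecLin := by
  set E : Matrix (Fin k → Fin N) (TBlk p → Fin N) ℂ :=
    fun i c => if i = extU N hN p c then 1 else 0 with hE
  have hRE : Rmat N p * E = 1 := by
    funext c c'
    rw [Matrix.mul_apply]
    have hterm : ∀ i, Rmat N p c i * E i c'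
        = if i = extU N hN p c' then Rmat N p c i else 0 := by
      intro i
      rw [hE]
      by_cases h : i = extU N hN p c' <;> simp [h]
    simp_rw [hterm]
    rw [Finset.sum_ite_eq' Finset.univ (extU N hN p c') (fun i => Rmat N p c i),
      if_pos (Finset.mem_univ _), Rmat_extU N hN p c c', Matrix.one_apply]
  intro v
  refine ⟨E.mulVecLin v, ?_⟩
  have h1 : (Rmat N p * E).mulVecLin v = v := by
    rw [hRE, Matrix.mulVecLin_one]; rfl
  rw [Matrix.mulVecLin_mul] at h1
  exact h1

lemma Lmat_injective (N : ℕ) (hN : 1 ≤ N) (p : PP k l) :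
    Function.Injective (Lmat N p).mulVecLin := by
  set F : Matrix (TBlk p → Fin N) (Fin l → Fin N) ℂ :=
    fun c j => if j = extL N hN p c then 1 else 0 with hF
  have hFL : F * Lmat N p = 1 := by
    funext c c'
    rw [Matrix.mul_apply]
    have hterm : ∀ j, F c j * Lmat N p j c'
        = if j = extL N hN p c then Lmat N p j c' else 0 := by
      intro j
      rw [hF]
      by_cases h : j = extL N hN p c <;> simp [h]
    simp_rw [hterm]
    rw [Finset.sum_ite_eq' Finset.univ (extL N hN p c) (fun j => Lmat N p j c'),
      if_pos (Finset.mem_univ _), Lmat_extL N hN p c c', Matrix.one_apply]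
  have hleft : ∀ u, F.mulVecLin ((Lmat N p).mulVecLin u) = u := by
    intro u
    have h1 : (F * Lmat N p).mulVecLin u = u := by
      rw [hFL, Matrix.mulVecLin_one]; rfl
    rw [Matrix.mulVecLin_mul] at h1
    exact h1
  intro v w hvw
  rw [← hleft v, ← hleft w, hvw]

lemma rank_Tmat0 (N : ℕ) (hN : 1 ≤ N) (p : PP k l) : (Tmat0 N p).rank = N ^ tP p := by
  rw [Tmat0_eq_mul N p, Matrix.rank, Matrix.mulVecLin_mul,
    LinearMap.range_comp_of_range_eq_top _
      (LinearMap.range_eq_top.mpr (Rmat_surjective N hN p))]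
  rw [LinearMap.finrank_range_of_inj (Lmat_injective N hN p)]
  rw [Module.finrank_pi, Fintype.card_fun, Fintype.card_fin, tP, Nat.card_eq_fintype_card]

end Aux


/-- the rank of `T_p` is `N^{t(p)}`. -/
theorem rank_TmatN {k l : ℕ} (N : ℕ) (hN : 1 ≤ N) (p : PP k l) :
    (TmatN N p).rank = N ^ tP p := by
  classical
  have hN0 : (N : ℂ) ≠ 0 := by
    exact_mod_cast Nat.one_le_iff_ne_zero.mp hN
  have hs : ((N : ℂ) ^ (-(betaP p : ℂ) / 2)) ≠ 0 := by
    simp [Complex.cpow_eq_zero_iff, hN0]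
  have hmv : (TmatN N p).mulVecLin
      = ((N : ℂ) ^ (-(betaP p : ℂ) / 2)) • (Tmat0 N p).mulVecLin := by
    ext v
    simp [TmatN, Matrix.mulVecLin, Matrix.smul_mulVec]
  rw [Matrix.rank, hmv, LinearMap.range_smul _ _ hs, ← Matrix.rank, rank_Tmat0 N hN p]
end

section
/- For partitions p ∈ P(k,l) and q ∈ P(l,m) (composable) and N ≥ 1, the associated linear maps satisfy T̊_{p*} = (T̊_p)*, T̊_{p⊗q} = T̊_p ⊗ T̊_q, and T̊_q ∘ T̊_p = N^{rl(q,p)} T̊_{qp}. -/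
/-- Reindexing equivalence identifying `(ℂ^N)^{⊗m} ⊗ (ℂ^N)^{⊗m'}` with `(ℂ^N)^{⊗(m+m')}`
at the level of index sets. -/
def idxEquiv (m m' N : ℕ) : ((Fin m → Fin N) × (Fin m' → Fin N)) ≃ (Fin (m + m') → Fin N) :=
  (Equiv.sumArrowEquivProdArrow (Fin m) (Fin m') (Fin N)).symm.trans
    (Equiv.arrowCongr finSumFinEquiv (Equiv.refl (Fin N)))

/-! The `(j, i)` entry of `T̊_p` is `1` exactly when the labelling `Sum.elim i j` of the points is
constant on the blocks of `p`, i.e. `p ≤ Setoid.ker (Sum.elim i j)`; the rules for `p*` and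
`p ⊗ p'` are reformulations of this. The `(j, i)` entry of `T̊_q T̊_p` counts the labellings `b`
of the middle row for which `i, b, j` is constant on the blocks of the relation generated by `p`
and `q`, that is, the functions on these blocks with prescribed values on the blocks meeting an
outer row. Such functions exist iff `qp` respects `(i, j)`, and then they are free on the
`rl(q, p)` closed loops, giving `N ^ rl(q, p)` of them. -/

open Setoid

open scoped Classical in
theorem Tmat0_apply {k l : ℕ} (N : ℕ) (p : PP k l) (j : Fin l → Fin N) (i : Fin k → Fin N) :
    Tmat0 N p j i = if p ≤ ker (Sum.elim i j) then 1 else 0 := by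
  unfold Tmat0
  exact if_congr Iff.rfl rfl rfl

theorem Setoid.comap_equiv_le_ker_iff {α β γ : Type*} (e : α ≃ β) (s : Setoid β) (f : α → γ) :
    s.comap e ≤ ker f ↔ s ≤ ker (f ∘ e.symm) := by
  constructor
  · intro h x y hxy
    exact h (x := e.symm x) (y := e.symm y) (by simpa [comap_rel] using hxy)
  · intro h x y hxy
    simpa [ker_def] using h ((comap_rel e s x y).1 hxy)

theorem sumSetoid_le_ker_iff {α β γ : Type*} (s : Setoid α) (t : Setoid β) (f : α → γ)
    (g : β → γ) : sumSetoid s t ≤ ker (Sum.elim f g) ↔ s ≤ ker f ∧ t ≤ ker g := by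
  constructor
  · intro h
    exact ⟨fun x y hxy => h (Sum.LiftRel.inl hxy), fun x y hxy => h (Sum.LiftRel.inr hxy)⟩
  · rintro ⟨hs, ht⟩ x y (hxy | hxy)
    exacts [hs hxy, ht hxy]

theorem swapP_le_ker_iff {k l : ℕ} {γ : Type*} (p : PP k l) (i : Fin l → γ) (j : Fin k → γ) :
    swapP p ≤ ker (Sum.elim i j) ↔ p ≤ ker (Sum.elim j i) := by
  rw [swapP]
  simpa using comap_equiv_le_ker_iff (Equiv.sumComm _ _) p (Sum.elim i j)

theorem elim_comp_tensorEquiv_symm {k l k' l' : ℕ} {γ : Type*} (i : Fin (k + k') → γ)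
    (j : Fin (l + l') → γ) :
    Sum.elim i j ∘ (tensorEquiv k l k' l').symm =
      Sum.elim (Sum.elim (i ∘ Fin.castAdd k') (j ∘ Fin.castAdd l'))
        (Sum.elim (i ∘ Fin.natAdd k) (j ∘ Fin.natAdd l)) := by
  funext u
  rcases u with (a | b) | (a | b) <;> simp [tensorEquiv, Equiv.sumSumSumComm]

theorem tensorP_le_ker_iff {k l k' l' : ℕ} {γ : Type*} (p : PP k l) (p' : PP k' l')
    (i : Fin (k + k') → γ) (j : Fin (l + l') → γ) :
    tensorP p p' ≤ ker (Sum.elim i j) ↔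
      p ≤ ker (Sum.elim (i ∘ Fin.castAdd k') (j ∘ Fin.castAdd l')) ∧
        p' ≤ ker (Sum.elim (i ∘ Fin.natAdd k) (j ∘ Fin.natAdd l)) := by
  rw [tensorP, comap_equiv_le_ker_iff, elim_comp_tensorEquiv_symm, sumSetoid_le_ker_iff]

theorem idxEquiv_symm_apply (m m' N : ℕ) (f : Fin (m + m') → Fin N) :
    (idxEquiv m m' N).symm f = (f ∘ Fin.castAdd m', f ∘ Fin.natAdd m) := by
  ext a <;> simp [idxEquiv, Equiv.sumArrowEquivProdArrow]

theorem bigS_le_ker_iff {k l m : ℕ} {γ : Type*} (p : PP k l) (q : PP l m)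
    (F : Fin k ⊕ (Fin l ⊕ Fin m) → γ) :
    bigS p q ≤ ker F ↔ p ≤ ker (F ∘ Sum.map id Sum.inl) ∧ q ≤ ker (F ∘ Sum.inr) := by
  constructor
  · intro h
    exact ⟨fun a b hab => h (Relation.EqvGen.rel _ _ (Or.inl ⟨a, b, hab, rfl, rfl⟩)),
      fun a b hab => h (Relation.EqvGen.rel _ _ (Or.inr ⟨a, b, hab, rfl, rfl⟩))⟩
  · rintro ⟨hp, hq⟩
    refine eqvGen_le ?_
    rintro _ _ (⟨a, b, hab, rfl, rfl⟩ | ⟨a, b, hab, rfl, rfl⟩)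
    exacts [hp hab, hq hab]

theorem bigS_le_ker_elim_iff {k l m : ℕ} {γ : Type*} (p : PP k l) (q : PP l m)
    (i : Fin k → γ) (b : Fin l → γ) (j : Fin m → γ) :
    bigS p q ≤ ker (Sum.elim i (Sum.elim b j)) ↔
      p ≤ ker (Sum.elim i b) ∧ q ≤ ker (Sum.elim b j) := by
  rw [bigS_le_ker_iff, Sum.elim_comp_map, Function.comp_id, Sum.elim_comp_inl,
    Sum.elim_comp_inr]

namespace Setoid

variable {X A γ : Type*} (S : Setoid X) (o : A → X) (u : A → γ)

def Extensions : Type _ := {G : Quotient S → γ // ∀ a, G (Quotient.mk S (o a)) = u a}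

open scoped Classical in
noncomputable def extensionsEquiv (h : S.comap o ≤ ker u) :
    Extensions S o u ≃ ({c // c ∉ Set.range (Quotient.mk S ∘ o)} → γ) where
  toFun G c := G.1 c
  invFun g := ⟨fun c => if hc : c ∈ Set.range (Quotient.mk S ∘ o) then u hc.choose
      else g ⟨c, hc⟩, fun a => by
    have ha : Quotient.mk S (o a) ∈ Set.range (Quotient.mk S ∘ o) := ⟨a, rfl⟩
    dsimp only
    rw [dif_pos ha]
    exact h ((comap_rel o S _ _).2 (Quotient.exact ha.choose_spec))⟩
  left_inv G := by
    refine Subtype.ext (funext fun c => ?_)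
    dsimp only
    split_ifs with hc
    · rw [← G.2]
      exact congrArg G.1 hc.choose_spec
    · rfl
  right_inv g := funext fun c => dif_neg c.2

theorem isEmpty_extensions (h : ¬ S.comap o ≤ ker u) :
    IsEmpty (Extensions S o u) :=
  ⟨fun G => h fun a a' haa' => by
    rw [ker_def, ← G.2 a, ← G.2 a']
    exact congrArg G.1 (Quotient.sound haa')⟩

open scoped Classical in
theorem card_extensions [Finite X] :
    Nat.card (Extensions S o u) =
      if S.comap o ≤ ker u then
        Nat.card γ ^ Nat.card {c // c ∉ Set.range (Quotient.mk S ∘ o)}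
      else 0 := by
  split_ifs with h
  · rw [Nat.card_congr (extensionsEquiv S o u h), Nat.card_fun]
  · have := isEmpty_extensions S o u h
    exact Nat.card_of_isEmpty

end Setoid

section Middle

variable {α β δ γ : Type*} (S : Setoid (α ⊕ (β ⊕ δ))) (i : α → γ) (j : δ → γ)

theorem elim_middle_eq_comp_mk
    (G : S.Extensions (Sum.map id Sum.inr) (Sum.elim i j)) :
    Sum.elim i (Sum.elim (G.1 ∘ Quotient.mk S ∘ Sum.inr ∘ Sum.inl) j) = G.1 ∘ Quotient.mk S := by
  funext x
  rcases x with a | b | d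
  · exact (G.2 (Sum.inl a)).symm
  · rfl
  · exact (G.2 (Sum.inr d)).symm

/-- Every point is outer or middle, so a function on the blocks is determined by its prescribed
values at outer points together with its values `b` at middle points. -/
def middleEquivExtensions :
    {b : β → γ // S ≤ ker (Sum.elim i (Sum.elim b j))} ≃
      S.Extensions (Sum.map id Sum.inr) (Sum.elim i j) where
  toFun b := ⟨Quotient.lift (Sum.elim i (Sum.elim b.1 j)) b.2, by rintro (a | a) <;> rfl⟩
  invFun G := ⟨G.1 ∘ Quotient.mk S ∘ Sum.inr ∘ Sum.inl, by
    rw [elim_middle_eq_comp_mk]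
    exact fun x y hxy => congrArg G.1 (Quotient.sound hxy)⟩
  left_inv b := rfl
  right_inv G := Subtype.ext (funext fun c => Quotient.inductionOn c fun x =>
    congrFun (elim_middle_eq_comp_mk S i j G) x)

theorem forall_mk_eq_middle_iff_notMem_range (c : Quotient S) :
    (∀ x, Quotient.mk S x = c → ∃ b, x = Sum.inr (Sum.inl b)) ↔
      c ∉ Set.range (Quotient.mk S ∘ Sum.map id Sum.inr) := by
  constructor
  · rintro h ⟨a, rfl⟩
    obtain ⟨b, hb⟩ := h _ rfl
    cases a <;> simp at hb
  · intro h x hx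
    rcases x with a | b | d
    · exact absurd ⟨Sum.inl a, hx⟩ h
    · exact ⟨b, rfl⟩
    · exact absurd ⟨Sum.inr d, hx⟩ h

end Middle

open scoped Classical in
theorem card_bigS_le_ker {k l m : ℕ} {γ : Type*} (p : PP k l) (q : PP l m) (i : Fin k → γ)
    (j : Fin m → γ) :
    Nat.card {b : Fin l → γ // bigS p q ≤ ker (Sum.elim i (Sum.elim b j))} =
      if compP q p ≤ ker (Sum.elim i j) then Nat.card γ ^ rlP q p else 0 := by
  rw [Nat.card_congr (middleEquivExtensions _ i j), card_extensions, compP, rlP,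
    Nat.card_congr (Equiv.subtypeEquivRight (forall_mk_eq_middle_iff_notMem_range _))]

theorem Tmat0_swapP {k l : ℕ} (N : ℕ) (p : PP k l) :
    Tmat0 N (swapP p) = (Tmat0 N p).conjTranspose := by
  ext j i
  rw [Matrix.conjTranspose_apply, Tmat0_apply, Tmat0_apply, swapP_le_ker_iff]
  split_ifs <;> simp

theorem Tmat0_tensorP {k l k' l' : ℕ} (N : ℕ) (p : PP k l) (p' : PP k' l') :
    Tmat0 N (tensorP p p') =
      Matrix.reindex (idxEquiv l l' N) (idxEquiv k k' N)
        (Matrix.kroneckerMap (· * ·) (Tmat0 N p) (Tmat0 N p')) := by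
  ext j i
  rw [Tmat0_apply, tensorP_le_ker_iff]
  simp only [Matrix.reindex_apply, Matrix.submatrix_apply, idxEquiv_symm_apply,
    Matrix.kroneckerMap_apply, Tmat0_apply, ite_zero_mul_ite_zero, one_mul]
  congr 1

theorem Tmat0_mul_Tmat0 {k l m : ℕ} (N : ℕ) (p : PP k l) (q : PP l m) :
    Tmat0 N q * Tmat0 N p = (N : ℂ) ^ (rlP q p) • Tmat0 N (compP q p) := by
  classical
  ext j i
  have hcard := card_bigS_le_ker p q i j
  rw [Nat.card_fin] at hcard
  simp only [Matrix.mul_apply, Matrix.smul_apply, Tmat0_apply, ite_zero_mul_ite_zero, one_mul,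
    and_comm (a := q ≤ _), ← bigS_le_ker_elim_iff]
  rw [Finset.sum_boole, ← Fintype.card_subtype, ← Nat.card_eq_fintype_card, hcard]
  split_ifs <;> simp

theorem Tmat0_rules_general {k l m k' l' : ℕ} (N : ℕ)
    (p : PP k l) (q : PP l m) (p' : PP k' l') :
    Tmat0 N (swapP p) = (Tmat0 N p).conjTranspose ∧
    Tmat0 N (tensorP p p') =
      Matrix.reindex (idxEquiv l l' N) (idxEquiv k k' N)
        (Matrix.kroneckerMap (· * ·) (Tmat0 N p) (Tmat0 N p')) ∧
    Tmat0 N q * Tmat0 N p = (N : ℂ) ^ (rlP q p) • Tmat0 N (compP q p) :=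
  ⟨Tmat0_swapP N p, Tmat0_tensorP N p p', Tmat0_mul_Tmat0 N p q⟩

/-- `T̊_{p*} = (T̊_p)*`, `T̊_{p⊗q} = T̊_p ⊗ T̊_q` and
`T̊_q ∘ T̊_p = N^{rl(q,p)} T̊_{qp}`. -/
theorem Tmat0_rules {k l m k' l' : ℕ} (N : ℕ) (hN : 1 ≤ N)
    (p : PP k l) (q : PP l m) (p' : PP k' l') :
    Tmat0 N (swapP p) = (Tmat0 N p).conjTranspose ∧
    Tmat0 N (tensorP p p') =
      Matrix.reindex (idxEquiv l l' N) (idxEquiv k k' N)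
        (Matrix.kroneckerMap (· * ·) (Tmat0 N p) (Tmat0 N p')) ∧
    Tmat0 N q * Tmat0 N p = (N : ℂ) ^ (rlP q p) • Tmat0 N (compP q p) :=
  Tmat0_rules_general N p q p'
end
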